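/- arXiv:2604.25024 — 7 statements merged into one kernel-verified Lean document; each statement's English description precedes it below -/
import Mathlib

section
/- Let γ : [0,ℓ] → ℝⁿ be a C¹ unit-speed curve, let t ∈ (0,ℓ) be a point at which γ′ is differentiable, and set κ := ‖γ″(t)‖. Then ‖γ(t+h) − γ(t−h)‖ = 2h − (κ²/3)h³ + o(h³) as h → 0⁺; equivalently, (‖γ(t+h) − γ(t−h)‖ − 2h)/h³ → −κ²/3 as h → 0⁺. (Euclidean case of the paper's chord-length expansion, Lemma 4.4.) -/
/-!
Write `T = γ'(t)`, `κ = ‖γ''‖` and `F(h) = γ(t+h) - γ(t-h) = ∫_{t-h}^{t+h} γ'`.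
For unit vectors `⟪T, γ'(s)⟫ = 1 - ‖γ'(s) - T‖² / 2`, so `⟪T, F⟫ = 2h - I/2` with
`I(h) = ∫_{t-h}^{t+h} ‖γ' - T‖²`. Since `γ'(s) - T = (s - t) γ'' + o(s - t)`, we get
`I = (2/3) κ² h³ + o(h³)` and `F - 2hT = o(h²)`, hence
`‖F‖² = 4h² - 2hI + ‖F - 2hT‖² = 4h² - (4/3) κ² h⁴ + o(h⁴)`,
and taking the square root gives `‖F‖ = 2h - (κ²/3) h³ + o(h³)`.
-/

open Set Filter Topology Asymptotics intervalIntegral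
open MeasureTheory (volume)
open scoped InnerProductSpace Interval

lemma abs_sub_le_of_mem_uIcc_sub_add {s t h : ℝ} (hs : s ∈ uIcc (t - h) (t + h)) :
    |s - t| ≤ |h| := by
  rcases mem_uIcc.mp hs with hs | hs <;>
    exact abs_le.mpr ⟨by linarith [neg_abs_le h, le_abs_self h],
      by linarith [neg_abs_le h, le_abs_self h]⟩

lemma eventually_forall_mem_uIcc_sub_add {P : ℝ → Prop} {t : ℝ} (hP : ∀ᶠ s in 𝓝 t, P s) :
    ∀ᶠ h in 𝓝 0, ∀ s ∈ uIcc (t - h) (t + h), P s := by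
  obtain ⟨δ, hδ, hball⟩ := Metric.eventually_nhds_iff.mp hP
  filter_upwards [Metric.ball_mem_nhds 0 hδ] with h hh s hs
  rw [mem_ball_zero_iff, Real.norm_eq_abs] at hh
  exact hball (by rw [Real.dist_eq]; exact (abs_sub_le_of_mem_uIcc_sub_add hs).trans_lt hh)

lemma eventually_continuousOn_uIcc_of_eventually_continuousAt {X : Type*} [TopologicalSpace X]
    {f : ℝ → X} {t : ℝ} (hf : ∀ᶠ s in 𝓝 t, ContinuousAt f s) :
    ∀ᶠ h in 𝓝 0, ContinuousOn f [[t - h, t + h]] := by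
  filter_upwards [eventually_forall_mem_uIcc_sub_add hf] with h hh
  exact fun s hs => (hh s hs).continuousWithinAt

lemma integral_sub_center (t h : ℝ) : ∫ s in t - h..t + h, (s - t) = 0 := by
  simp only [integral_comp_sub_right (fun x : ℝ => x), sub_sub_cancel_left, add_sub_cancel_left,
    integral_id, even_two, Even.neg_pow, sub_self, zero_div]

lemma integral_sub_center_sq (t h : ℝ) : ∫ s in t - h..t + h, (s - t) ^ 2 = 2 * h ^ 3 / 3 := by
  rw [integral_comp_sub_right (fun x : ℝ => x ^ 2), sub_sub_cancel_left, add_sub_cancel_left,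
    integral_pow]
  ring

lemma isLittleO_intervalIntegral_sub_add {E : Type*} [NormedAddCommGroup E] [NormedSpace ℝ E]
    {g : ℝ → E} {t : ℝ} {k : ℕ} (hg : g =o[𝓝 t] fun s => (s - t) ^ k) :
    (fun h => ∫ s in t - h..t + h, g s) =o[𝓝 0] fun h => h ^ (k + 1) := by
  refine isLittleO_iff.mpr fun c hc => ?_
  filter_upwards [eventually_forall_mem_uIcc_sub_add (hg.def (half_pos hc))] with h hh
  have hbound : ∀ s ∈ Ι (t - h) (t + h), ‖g s‖ ≤ c / 2 * |h| ^ k := fun s hs => by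
    refine (hh s (uIoc_subset_uIcc hs)).trans ?_
    rw [norm_pow, Real.norm_eq_abs]
    gcongr c / 2 * ?_ ^ k
    exact abs_sub_le_of_mem_uIcc_sub_add (uIoc_subset_uIcc hs)
  calc ‖∫ s in t - h..t + h, g s‖ ≤ c / 2 * |h| ^ k * |t + h - (t - h)| :=
        norm_integral_le_of_norm_le_const hbound
    _ = c * ‖h ^ (k + 1)‖ := by
        rw [show t + h - (t - h) = 2 * h by ring, abs_mul, abs_two, norm_pow, Real.norm_eq_abs]
        ring

lemma isLittleO_norm_sq_sub_norm_sq {α E : Type*} [SeminormedAddCommGroup E] {l : Filter α}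
    {u v : α → E} {f : α → ℝ} (huv : (fun x => u x - v x) =o[l] f) (hv : v =O[l] f) :
    (fun x => ‖u x‖ ^ 2 - ‖v x‖ ^ 2) =o[l] fun x => f x ^ 2 := by
  have hdiff : (fun x => ‖u x‖ - ‖v x‖) =o[l] f :=
    (IsBigO.of_bound 1 (Eventually.of_forall fun x => by
      simpa using abs_norm_sub_norm_le (u x) (v x))).trans_isLittleO huv
  have hsum : (fun x => ‖u x‖ + ‖v x‖) =O[l] f := by
    have hu : u =O[l] f := by simpa using huv.isBigO.add hv
    exact hu.norm_left.add hv.norm_left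
  simpa only [sq, mul_self_sub_mul_self] using hsum.mul_isLittleO hdiff

lemma tendsto_sub_mul_div_cube_of_sq_sub_isLittleO {N : ℝ → ℝ} {c a : ℝ} (hc : 0 < c)
    (hN : ∀ᶠ h in 𝓝[>] 0, 0 ≤ N h)
    (hsq : (fun h => N h ^ 2 - (c * h) ^ 2 - a * h ^ 4) =o[𝓝[>] 0] fun h => h ^ 4) :
    Tendsto (fun h => (N h - c * h) / h ^ 3) (𝓝[>] 0) (𝓝 (a / (2 * c))) := by
  set A : ℝ → ℝ := fun h => (N h ^ 2 - (c * h) ^ 2) / h ^ 4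
  have hpos : ∀ᶠ h in 𝓝[>] (0 : ℝ), 0 < h := self_mem_nhdsWithin
  have hA : Tendsto A (𝓝[>] 0) (𝓝 a) := by
    have hlim := hsq.tendsto_div_nhds_zero.add_const a
    rw [zero_add] at hlim
    refine hlim.congr' ?_
    filter_upwards [hpos] with h hh
    simp only [A]
    field_simp
    ring
  have hratio : Tendsto (fun h => N h / h) (𝓝[>] 0) (𝓝 c) := by
    have hlim : Tendsto (fun h => Real.sqrt (c ^ 2 + h ^ 2 * A h)) (𝓝[>] 0) (𝓝 c) := by
      have h0 : Tendsto (fun h : ℝ => h ^ 2) (𝓝[>] 0) (𝓝 0) :=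
        ((continuous_pow 2).tendsto' 0 0 (by simp)).mono_left nhdsWithin_le_nhds
      have hsqrt := ((tendsto_const_nhds (x := c ^ 2)).add (h0.mul hA)).sqrt
      rwa [zero_mul, add_zero, Real.sqrt_sq hc.le] at hsqrt
    refine hlim.congr' ?_
    filter_upwards [hpos, hN] with h hh hNh
    rw [← Real.sqrt_sq (div_nonneg hNh hh.le)]
    congr 1
    simp only [A]
    field_simp
    ring
  have hlim := hA.div (hratio.add_const c) (by positivity)
  rw [← two_mul] at hlim
  refine hlim.congr' ?_
  -- `N - c h = h⁴ A / (N + c h)`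
  filter_upwards [hpos, hN] with h hh hNh
  simp only [Pi.div_apply, A]
  field_simp
  ring

section NormedSpace

variable {E : Type*} [NormedAddCommGroup E] [NormedSpace ℝ E] {γ γ' : ℝ → E} {γ'' : E} {t : ℝ}

lemma isLittleO_integral_norm_deriv_sub_sq (hγ' : ∀ᶠ s in 𝓝 t, ContinuousAt γ' s)
    (hγ'' : HasDerivAt γ' γ'' t) :
    (fun h => (∫ s in t - h..t + h, ‖γ' s - γ' t‖ ^ 2) - 2 / 3 * ‖γ''‖ ^ 2 * h ^ 3)
      =o[𝓝 0] fun h => h ^ 3 := by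
  have hlin : (fun s => (s - t) • γ'') =O[𝓝 t] fun s => s - t :=
    .of_bound ‖γ''‖ (.of_forall fun s => by rw [norm_smul, mul_comm])
  refine (isLittleO_intervalIntegral_sub_add (k := 2)
    (isLittleO_norm_sq_sub_norm_sq (hasDerivAt_iff_isLittleO.mp hγ'') hlin)).congr' ?_ .rfl
  filter_upwards [eventually_continuousOn_uIcc_of_eventually_continuousAt hγ'] with h hcont
  simp_rw [norm_smul, mul_pow, Real.norm_eq_abs, sq_abs]
  have hdev_int : IntervalIntegrable (fun s => ‖γ' s - γ' t‖ ^ 2) volume (t - h) (t + h) :=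
    ((hcont.sub continuousOn_const).norm.pow 2).intervalIntegrable
  have hquad_int : IntervalIntegrable (fun s => (s - t) ^ 2 * ‖γ''‖ ^ 2) volume (t - h) (t + h) :=
    (by fun_prop : Continuous fun s => (s - t) ^ 2 * ‖γ''‖ ^ 2).intervalIntegrable _ _
  rw [integral_sub hdev_int hquad_int, integral_mul_const, integral_sub_center_sq]
  ring

variable [CompleteSpace E]

lemma eventually_intervalIntegral_eq_sub_of_eventually_hasDerivAt
    (hγ : ∀ᶠ s in 𝓝 t, HasDerivAt γ (γ' s) s) (hγ' : ∀ᶠ s in 𝓝 t, ContinuousAt γ' s) :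
    ∀ᶠ h in 𝓝 0, ∫ s in t - h..t + h, γ' s = γ (t + h) - γ (t - h) := by
  filter_upwards [eventually_forall_mem_uIcc_sub_add hγ,
    eventually_continuousOn_uIcc_of_eventually_continuousAt hγ'] with h hderiv hcont
  exact integral_eq_sub_of_hasDerivAt hderiv hcont.intervalIntegrable

lemma isLittleO_chord_sub_smul_deriv (hγ : ∀ᶠ s in 𝓝 t, HasDerivAt γ (γ' s) s)
    (hγ' : ∀ᶠ s in 𝓝 t, ContinuousAt γ' s) (hγ'' : HasDerivAt γ' γ'' t) :
    (fun h => γ (t + h) - γ (t - h) - (2 * h) • γ' t) =o[𝓝 0] fun h => h ^ 2 := by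
  have hρ : (fun s => γ' s - γ' t - (s - t) • γ'') =o[𝓝 t] fun s => (s - t) ^ 1 := by
    simpa only [pow_one] using hasDerivAt_iff_isLittleO.mp hγ''
  refine (isLittleO_intervalIntegral_sub_add hρ).congr' ?_ .rfl
  filter_upwards [eventually_continuousOn_uIcc_of_eventually_continuousAt hγ',
    eventually_intervalIntegral_eq_sub_of_eventually_hasDerivAt hγ hγ'] with h hcont hFTC
  have hdev_int : IntervalIntegrable (fun s => γ' s - γ' t) volume (t - h) (t + h) :=
    (hcont.sub continuousOn_const).intervalIntegrable
  have hlin_int : IntervalIntegrable (fun s => (s - t) • γ'') volume (t - h) (t + h) :=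
    (by fun_prop : Continuous fun s => (s - t) • γ'').intervalIntegrable _ _
  rw [integral_sub hdev_int hlin_int,
    integral_sub hcont.intervalIntegrable intervalIntegrable_const, integral_const,
    intervalIntegral.integral_smul_const, integral_sub_center, hFTC, zero_smul, sub_zero]
  congr 2
  ring

end NormedSpace

section InnerProductSpace

variable {E : Type*} [NormedAddCommGroup E] [InnerProductSpace ℝ E]

lemma norm_sq_eq_of_norm_eq_one {T : E} (hT : ‖T‖ = 1) (x : E) (r : ℝ) :
    ‖x‖ ^ 2 = 2 * r * ⟪T, x⟫_ℝ - r ^ 2 + ‖x - r • T‖ ^ 2 := by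
  rw [norm_sub_sq_real, real_inner_smul_right, real_inner_comm, norm_smul, hT, Real.norm_eq_abs,
    mul_one, sq_abs]
  ring

lemma inner_intervalIntegral_of_norm_eq_one [CompleteSpace E] {f : ℝ → E} {T : E} {a b : ℝ}
    (hf : ContinuousOn f [[a, b]]) (hfu : ∀ s ∈ [[a, b]], ‖f s‖ = 1) (hT : ‖T‖ = 1) :
    ⟪T, ∫ s in a..b, f s⟫_ℝ = (b - a) - (∫ s in a..b, ‖f s - T‖ ^ 2) / 2 := by
  have hsq : ContinuousOn (fun s => ‖f s - T‖ ^ 2) [[a, b]] :=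
    (hf.sub continuousOn_const).norm.pow 2
  calc ⟪T, ∫ s in a..b, f s⟫_ℝ = ∫ s in a..b, ⟪T, f s⟫_ℝ :=
        ((innerSL ℝ T).intervalIntegral_comp_comm hf.intervalIntegrable).symm
    _ = ∫ s in a..b, (1 - ‖f s - T‖ ^ 2 / 2) := by
        refine integral_congr fun s hs => ?_
        have hdist := norm_sub_sq_real (f s) T
        rw [hfu s hs, hT, real_inner_comm] at hdist
        linarith
    _ = (b - a) - (∫ s in a..b, ‖f s - T‖ ^ 2) / 2 := by
        rw [integral_sub intervalIntegrable_const (hsq.intervalIntegrable.div_const 2),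
          integral_div]
        simp

theorem tendsto_norm_chord_sub_div_cube [CompleteSpace E] {γ γ' : ℝ → E} {γ'' : E} {t : ℝ}
    (hγ : ∀ᶠ s in 𝓝 t, HasDerivAt γ (γ' s) s) (hγ' : ∀ᶠ s in 𝓝 t, ContinuousAt γ' s)
    (hunit : ∀ᶠ s in 𝓝 t, ‖γ' s‖ = 1) (hγ'' : HasDerivAt γ' γ'' t) :
    Tendsto (fun h => (‖γ (t + h) - γ (t - h)‖ - 2 * h) / h ^ 3) (𝓝[>] 0)
      (𝓝 (-(‖γ''‖ ^ 2) / 3)) := by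
  set I : ℝ → ℝ := fun h => ∫ s in t - h..t + h, ‖γ' s - γ' t‖ ^ 2
  have hT : ‖γ' t‖ = 1 := hunit.self_of_nhds
  have hinner : ∀ᶠ h in 𝓝 0, ⟪γ' t, γ (t + h) - γ (t - h)⟫_ℝ = 2 * h - I h / 2 := by
    filter_upwards [eventually_continuousOn_uIcc_of_eventually_continuousAt hγ',
      eventually_forall_mem_uIcc_sub_add hunit,
      eventually_intervalIntegral_eq_sub_of_eventually_hasDerivAt hγ hγ'] with h hcont hu hFTC
    rw [← hFTC, inner_intervalIntegral_of_norm_eq_one hcont hu hT]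
    ring
  have hsq : (fun h => ‖γ (t + h) - γ (t - h)‖ ^ 2 - (2 * h) ^ 2 - -(4 / 3) * ‖γ''‖ ^ 2 * h ^ 4)
      =o[𝓝 0] fun h => h ^ 4 := by
    have hcubic := ((isBigO_refl (fun h : ℝ => h) _).const_mul_left (-2)).mul_isLittleO
      (isLittleO_integral_norm_deriv_sub_sq hγ' hγ'')
    have hquartic := (isLittleO_chord_sub_smul_deriv hγ hγ' hγ'').norm_left.pow two_pos
    refine ((hcubic.congr_right fun h => by ring).add
      (hquartic.congr_right fun h => by ring)).congr' ?_ .rfl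
    filter_upwards [hinner] with h hh
    rw [norm_sq_eq_of_norm_eq_one hT (γ (t + h) - γ (t - h)) (2 * h), hh]
    ring
  convert tendsto_sub_mul_div_cube_of_sq_sub_isLittleO (N := fun h => ‖γ (t + h) - γ (t - h)‖)
    two_pos (.of_forall fun _ => norm_nonneg _) (hsq.mono nhdsWithin_le_nhds) using 2
  ring

end InnerProductSpace

/-- **Chord-length expansion (Euclidean case of Lemma 4.4).**
If `γ` is a `C¹` unit-speed curve and `γ'` is differentiable at `t ∈ (0, ℓ)` with second
derivative `γ''` and `κ = ‖γ''‖`, then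
`‖γ(t+h) − γ(t−h)‖ = 2h − (κ²/3) h³ + o(h³)` as `h → 0⁺`. -/
theorem chord_length_expansion
    (n : ℕ) (ℓ : ℝ)
    (γ γ' : ℝ → EuclideanSpace ℝ (Fin n))
    (hd : ∀ s ∈ Icc (0:ℝ) ℓ, HasDerivWithinAt γ (γ' s) (Icc 0 ℓ) s)
    (hu : ∀ s ∈ Icc (0:ℝ) ℓ, ‖γ' s‖ = 1)
    (hc : ContinuousOn γ' (Icc 0 ℓ))
    (t : ℝ) (ht : t ∈ Ioo (0:ℝ) ℓ)
    (γ'' : EuclideanSpace ℝ (Fin n))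
    (hdd : HasDerivWithinAt γ' γ'' (Icc 0 ℓ) t) :
    Tendsto (fun h : ℝ => (‖γ (t + h) - γ (t - h)‖ - 2 * h) / h ^ 3)
      (nhdsWithin 0 (Ioi 0)) (nhds (-(‖γ''‖ ^ 2) / 3)) := by
  have hinterior : ∀ᶠ s in 𝓝 t, Icc 0 ℓ ∈ 𝓝 s ∧ s ∈ Icc 0 ℓ := by
    filter_upwards [Ioo_mem_nhds ht.1 ht.2] with s hs
    exact ⟨Icc_mem_nhds hs.1 hs.2, Ioo_subset_Icc_self hs⟩
  refine tendsto_norm_chord_sub_div_cube ?_ ?_ ?_ (hdd.hasDerivAt (Icc_mem_nhds ht.1 ht.2))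
  · filter_upwards [hinterior] with s ⟨hnhds, hs⟩
    exact (hd s hs).hasDerivAt hnhds
  · filter_upwards [hinterior] with s ⟨hnhds, _⟩
    exact hc.continuousAt hnhds
  · filter_upwards [hinterior] with s ⟨_, hs⟩
    exact hu s hs
end

section
/- Let γ : [0,ℓ] → ℝⁿ be a unit-speed curve whose derivative γ′ is L-Lipschitz. Then for every t ∈ (0,ℓ) and every h > 0 with t − h ≥ 0 and t + h ≤ ℓ, one has ‖γ(t+h) − γ(t−h)‖ ≥ 2h − (L²/3)h³. (Euclidean case of the paper's uniform chord-length estimate, Lemma 4.5.) -/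
open Set

/-!
Let `v = γ'(t)`. Since `γ'` is unit-speed and `L`-Lipschitz, the polarization identity gives
`⟪v, γ'(s)⟫ = 1 - ‖γ'(s) - v‖² / 2 ≥ 1 - L² (s - t)² / 2`. Hence
`s ↦ ⟪v, γ(s)⟫ - (s - t) + L² (s - t)³ / 6` has nonnegative derivative and is monotone;
comparing its values at `t ± h` bounds `⟪v, γ(t + h) - γ(t - h)⟫` from below by `2h - L² h³ / 3`,
and Cauchy–Schwarz with `‖v‖ = 1` finishes.
-/

section UnitSpeed

variable {E : Type*} [NormedAddCommGroup E] [InnerProductSpace ℝ E]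

theorem real_inner_eq_one_sub_norm_sub_sq_div_two {u v : E} (hu : ‖u‖ = 1) (hv : ‖v‖ = 1) :
    inner ℝ u v = 1 - ‖u - v‖ ^ 2 / 2 := by
  rw [norm_sub_sq_real, hu, hv]
  ring

variable {γ γ' : ℝ → E} {D : Set ℝ} {L : NNReal} {t : ℝ}

theorem one_sub_sq_mul_sq_div_two_le_real_inner (hu : ∀ s ∈ D, ‖γ' s‖ = 1)
    (hlip : LipschitzOnWith L γ' D) (ht : t ∈ D) {s : ℝ} (hs : s ∈ D) :
    1 - (L : ℝ) ^ 2 * (s - t) ^ 2 / 2 ≤ inner ℝ (γ' t) (γ' s) := by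
  have hdist : ‖γ' s - γ' t‖ ≤ L * |s - t| := by
    simpa [dist_eq_norm, Real.dist_eq] using hlip.norm_sub_le hs ht
  have hsq : ‖γ' s - γ' t‖ ^ 2 ≤ (L : ℝ) ^ 2 * (s - t) ^ 2 := by
    calc ‖γ' s - γ' t‖ ^ 2 ≤ (L * |s - t|) ^ 2 := by gcongr
      _ = (L : ℝ) ^ 2 * (s - t) ^ 2 := by rw [mul_pow, sq_abs]
  rw [real_inner_eq_one_sub_norm_sub_sq_div_two (hu t ht) (hu s hs), norm_sub_rev]
  linarith

theorem monotoneOn_inner_sub_add_cube (hD : Convex ℝ D)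
    (hd : ∀ s ∈ D, HasDerivWithinAt γ (γ' s) D s) (hu : ∀ s ∈ D, ‖γ' s‖ = 1)
    (hlip : LipschitzOnWith L γ' D) (ht : t ∈ D) :
    MonotoneOn (fun s ↦ inner ℝ (γ' t) (γ s) - (s - t) + (L : ℝ) ^ 2 * (s - t) ^ 3 / 6) D := by
  have hderiv : ∀ s ∈ D, HasDerivWithinAt
      (fun s ↦ inner ℝ (γ' t) (γ s) - (s - t) + (L : ℝ) ^ 2 * (s - t) ^ 3 / 6)
      (inner ℝ (γ' t) (γ' s) - 1 + (L : ℝ) ^ 2 * (s - t) ^ 2 / 2) D s := by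
    intro s hs
    have hlin := ((hasDerivWithinAt_const s D (γ' t)).inner ℝ (hd s hs)).sub
      ((hasDerivWithinAt_id s D).sub_const t)
    have hcube := ((((hasDerivWithinAt_id s D).sub_const t).pow 3).const_mul
      ((L : ℝ) ^ 2)).div_const 6
    exact (hlin.add hcube).congr_deriv (by simp only [inner_zero_left, add_zero, id]; ring)
  refine monotoneOn_of_hasDerivWithinAt_nonneg hD (fun s hs ↦ (hderiv s hs).continuousWithinAt)
    (fun s hs ↦ (hderiv s (interior_subset hs)).mono interior_subset) fun s hs ↦ ?_
  linarith [one_sub_sq_mul_sq_div_two_le_real_inner hu hlip ht (interior_subset hs)]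

end UnitSpeed

/-- **Uniform chord-length estimate (Euclidean case of Lemma 4.5).**
If `γ` is a unit-speed curve whose derivative is `L`-Lipschitz, then
`‖γ(t+h) − γ(t−h)‖ ≥ 2h − (L²/3) h³` whenever `[t−h, t+h] ⊆ [0, ℓ]`. -/
theorem uniform_chord_length_estimate
    (n : ℕ) (ℓ : ℝ) (L : NNReal)
    (γ γ' : ℝ → EuclideanSpace ℝ (Fin n))
    (hd : ∀ s ∈ Icc (0:ℝ) ℓ, HasDerivWithinAt γ (γ' s) (Icc 0 ℓ) s)
    (hu : ∀ s ∈ Icc (0:ℝ) ℓ, ‖γ' s‖ = 1)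
    (hlip : LipschitzOnWith L γ' (Icc 0 ℓ)) :
    ∀ t ∈ Ioo (0:ℝ) ℓ, ∀ h : ℝ, 0 < h → 0 ≤ t - h → t + h ≤ ℓ →
      2 * h - ((L : ℝ) ^ 2 / 3) * h ^ 3 ≤ ‖γ (t + h) - γ (t - h)‖ := by
  intro t ht h hh hleft hright
  have htI : t ∈ Icc 0 ℓ := Ioo_subset_Icc_self ht
  have hmono := monotoneOn_inner_sub_add_cube (convex_Icc 0 ℓ) hd hu hlip htI
    (⟨hleft, by linarith⟩ : t - h ∈ Icc 0 ℓ) (⟨by linarith, hright⟩ : t + h ∈ Icc 0 ℓ)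
    (by linarith)
  have hinner : 2 * h - ((L : ℝ) ^ 2 / 3) * h ^ 3 ≤ inner ℝ (γ' t) (γ (t + h) - γ (t - h)) := by
    simp only [add_sub_cancel_left, sub_sub_cancel_left] at hmono
    rw [inner_sub_right]
    linarith
  calc 2 * h - ((L : ℝ) ^ 2 / 3) * h ^ 3
      ≤ inner ℝ (γ' t) (γ (t + h) - γ (t - h)) := hinner
    _ ≤ ‖γ' t‖ * ‖γ (t + h) - γ (t - h)‖ := real_inner_le_norm _ _
    _ = ‖γ (t + h) - γ (t - h)‖ := by rw [hu t htI, one_mul]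
end

section
/- Let ℓ > 0, let γ : [0,ℓ] → ℝⁿ be a unit-speed curve whose derivative γ′ is L-Lipschitz, and let γ̃ : [0,ℓ] → ℝ² be a chord-convex curve parametrized by arclength which majorizes γ. Then γ̃ is differentiable at every point of [0,ℓ] and there exists K ≥ 0 such that γ̃′ is K-Lipschitz; in particular γ̃ is C^{1,1}. (Regularity part of the paper's Lemma 4.6, Euclidean case.) -/
/-!
Majorization transfers the chord estimate of `γ` to `σ`: since `γ'` is an `L`-Lipschitz field of
unit vectors, a chord of `γ` over a parameter interval of length `d` has length at least
`d - L² d³ / 6`, hence so does the corresponding chord of `σ`, while `σ` is `1`-Lipschitz. For such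
a curve the two pieces of a chord split at `m` are almost parallel (an inner product computation),
so the slopes over `[a, m]` and `[a, b]` differ by `O(b - a)` as long as `m` lies past the midpoint.
Summing over dyadic halvings extends this to all nested intervals. Hence the slopes at `t` are
Cauchy as the other endpoint tends to `t`, their limit `σ' t` satisfies
`‖slope σ t x - σ' t‖ = O(|x - t|)`, and comparing `σ' s` and `σ' t` with the slope over `[s, t]`
shows that `σ'` is Lipschitz.
-/
open Set Filter Topology
open scoped RealInnerProductSpace

lemma exists_tendsto_forall_dist_le {α β : Type*} [PseudoMetricSpace β] [CompleteSpace β]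
    {l : Filter α} [l.NeBot] {g : α → β} {r : α → ℝ} {s : Set α} (hs : s ∈ l)
    (hr : Tendsto r l (𝓝 0)) (hg : ∀ x ∈ s, ∀ y ∈ s, dist (g x) (g y) ≤ r x + r y) :
    ∃ z, Tendsto g l (𝓝 z) ∧ ∀ x ∈ s, dist (g x) z ≤ r x := by
  obtain ⟨z, hz⟩ : ∃ z, Tendsto g l (𝓝 z) := by
    refine cauchy_map_iff_exists_tendsto.1 (Metric.cauchy_iff.2 ⟨inferInstance, fun ε hε => ?_⟩)
    refine ⟨g '' (s ∩ r ⁻¹' Iio (ε / 2)),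
      image_mem_map (inter_mem hs (hr (Iio_mem_nhds (half_pos hε)))), ?_⟩
    rintro _ ⟨x, ⟨hxs, hxr⟩, rfl⟩ _ ⟨y, ⟨hys, hyr⟩, rfl⟩
    exact (hg x hxs y hys).trans_lt (by simp only [mem_preimage, mem_Iio] at hxr hyr; linarith)
  refine ⟨z, hz, fun x hx => le_of_tendsto_of_tendsto (tendsto_const_nhds.dist hz)
    (by simpa using tendsto_const_nhds.add hr) (eventually_of_mem hs (hg x hx))⟩

section InnerProductSpace

variable {E : Type*} [NormedAddCommGroup E] [InnerProductSpace ℝ E]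

lemma norm_smul_sub_smul_sq_le_of_le_norm_add {a b : E} {p q e : ℝ} (ha : ‖a‖ ≤ p)
    (hb : ‖b‖ ≤ q) (hab : p + q - e ≤ ‖a + b‖) :
    ‖q • a - p • b‖ ^ 2 ≤ 2 * (p + q) * e * (p * q) := by
  have hp : 0 ≤ p := (norm_nonneg a).trans ha
  have hq : 0 ≤ q := (norm_nonneg b).trans hb
  have hsum : ‖a + b‖ ≤ p + q := (norm_add_le a b).trans (add_le_add ha hb)
  have hinner : p * q - (p + q) * e ≤ ⟪a, b⟫ := by
    have := norm_add_sq_real a b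
    nlinarith [sq_nonneg (‖a + b‖ - (p + q)), mul_nonneg (by linarith : 0 ≤ ‖a + b‖ - (p + q) + e)
      (add_nonneg hp hq), mul_self_le_mul_self (norm_nonneg a) ha,
      mul_self_le_mul_self (norm_nonneg b) hb]
  have hexp : ‖q • a - p • b‖ ^ 2 = q ^ 2 * ‖a‖ ^ 2 - 2 * (p * q) * ⟪a, b⟫ + p ^ 2 * ‖b‖ ^ 2 := by
    rw [norm_sub_sq_real, norm_smul, norm_smul, real_inner_smul_left, real_inner_smul_right,
      Real.norm_of_nonneg hp, Real.norm_of_nonneg hq]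
    ring
  rw [hexp]
  nlinarith [mul_le_mul_of_nonneg_left hinner (mul_nonneg hp hq),
    mul_le_mul_of_nonneg_left (pow_le_pow_left₀ (norm_nonneg a) ha 2) (sq_nonneg q),
    mul_le_mul_of_nonneg_left (pow_le_pow_left₀ (norm_nonneg b) hb 2) (sq_nonneg p)]

variable {I : Set ℝ} [I.OrdConnected]

lemma dist_sub_cube_le_dist_of_unitSpeed {γ γ' : ℝ → E} {L : NNReal}
    (hd : ∀ t ∈ I, HasDerivWithinAt γ (γ' t) I t) (hu : ∀ t ∈ I, ‖γ' t‖ = 1)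
    (hlip : LipschitzOnWith L γ' I) (s : ℝ) (hs : s ∈ I) (t : ℝ) (ht : t ∈ I) :
    dist s t - (L : ℝ) ^ 2 / 6 * dist s t ^ 3 ≤ dist (γ s) (γ t) := by
  wlog hst : s ≤ t generalizing s t
  · simpa [dist_comm] using this t ht s hs (le_of_not_ge hst)
  have hsub : Icc s t ⊆ I := Set.OrdConnected.out' hs ht
  set v := γ' s
  have hderiv : ∀ u ∈ Icc s t, HasDerivWithinAt
      (fun u => ⟪γ u, v⟫ - ((u - s) - (L : ℝ) ^ 2 / 6 * (u - s) ^ 3))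
      (⟪γ' u, v⟫ - (1 - (L : ℝ) ^ 2 / 2 * (u - s) ^ 2)) (Icc s t) u := fun u hu' => by
    have hpoly : HasDerivAt (fun u => (u - s) - (L : ℝ) ^ 2 / 6 * (u - s) ^ 3)
        (1 - (L : ℝ) ^ 2 / 2 * (u - s) ^ 2) u := by
      refine (((hasDerivAt_id u).sub_const s).sub
        ((((hasDerivAt_id u).sub_const s).pow 3).const_mul ((L : ℝ) ^ 2 / 6))).congr_deriv ?_
      simp only [id, Nat.cast_ofNat]
      ring
    exact (((hd u (hsub hu')).mono hsub).inner ℝ (hasDerivWithinAt_const u _ v)).sub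
      hpoly.hasDerivWithinAt |>.congr_deriv (by simp)
  have hmono := monotoneOn_of_hasDerivWithinAt_nonneg (convex_Icc s t)
    (fun u hu' => (hderiv u hu').continuousWithinAt)
    (fun u hu' => (hderiv u (interior_subset hu')).mono interior_subset) fun u hu' => by
      have hu' := interior_subset hu'
      have hsq : ‖γ' u - v‖ ^ 2 = 2 - 2 * ⟪γ' u, v⟫ := by
        rw [norm_sub_sq_real, hu u (hsub hu'), hu s hs]; ring
      have hclose : ‖γ' u - v‖ ≤ L * (u - s) := by
        simpa [dist_eq_norm, Real.dist_eq, abs_of_nonneg (sub_nonneg.2 hu'.1)]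
          using hlip.dist_le_mul u (hsub hu') s hs
      nlinarith [pow_le_pow_left₀ (norm_nonneg _) hclose 2]
  have hF := hmono (left_mem_Icc.2 hst) (right_mem_Icc.2 hst) hst
  have hinner : ⟪γ t - γ s, v⟫ ≤ ‖γ t - γ s‖ := by
    simpa [v, hu s hs] using real_inner_le_norm (γ t - γ s) v
  rw [dist_comm (γ s), dist_eq_norm (γ t), Real.dist_eq, abs_sub_comm,
    abs_of_nonneg (sub_nonneg.2 hst)]
  rw [inner_sub_left] at hinner
  norm_num at hF
  linarith

variable {f : ℝ → E} {C : ℝ}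

lemma norm_slope_sub_slope_le_of_le_two_mul (hf : LipschitzOnWith 1 f I)
    (hlow : ∀ s ∈ I, ∀ t ∈ I, dist s t - C * dist s t ^ 3 ≤ dist (f s) (f t)) (hC : 0 ≤ C)
    {a m b : ℝ} (ha : a ∈ I) (hb : b ∈ I) (ham : a < m) (hmb : m ≤ b)
    (h2 : b - a ≤ 2 * (m - a)) :
    ‖slope f a m - slope f a b‖ ≤ √(2 * C) * (b - a) := by
  have hm : m ∈ I := Set.OrdConnected.out' ha hb ⟨ham.le, hmb⟩
  have hma : 0 < m - a := sub_pos.2 ham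
  have hba : 0 < b - a := sub_pos.2 (ham.trans_le hmb)
  have hupper : ∀ s ∈ I, ∀ t ∈ I, s ≤ t → ‖f t - f s‖ ≤ t - s := fun s hs t ht hst => by
    simpa [dist_eq_norm, Real.dist_eq, abs_of_nonneg (sub_nonneg.2 hst)]
      using hf.dist_le_mul t ht s hs
  have hchord : b - a - C * (b - a) ^ 3 ≤ ‖(f m - f a) + (f b - f m)‖ := by
    simpa [dist_eq_norm, Real.dist_eq, abs_of_nonneg (sub_nonneg.2 (ham.le.trans hmb))]
      using hlow b hb a ha
  have hsq := norm_smul_sub_smul_sq_le_of_le_norm_add (hupper a ha m hm ham.le)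
    (hupper m hm b hb hmb) (e := C * (b - a) ^ 3) (by ring_nf at hchord ⊢; linarith)
  have hnorm : ‖(b - m) • (f m - f a) - (m - a) • (f b - f m)‖
      ≤ √(2 * C) * (b - a) * ((m - a) * (b - a)) := by
    rw [← pow_le_pow_iff_left₀ (norm_nonneg _) (by positivity) two_ne_zero, mul_pow, mul_pow,
      Real.sq_sqrt (by positivity)]
    refine hsq.trans ?_
    nlinarith [mul_nonneg (mul_nonneg hC (pow_nonneg hba.le 4)) hma.le, sub_nonneg.2 hmb]
  have hid : slope f a m - slope f a b = ((m - a) * (b - a))⁻¹ •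
      ((b - m) • (f m - f a) - (m - a) • (f b - f m)) := by
    have := hma.ne'
    have := hba.ne'
    simp only [slope_def_module]
    rw [show f b - f a = (f m - f a) + (f b - f m) by abel]
    match_scalars <;> field_simp <;> ring
  rw [hid, norm_smul, norm_inv, Real.norm_of_nonneg (by positivity),
    inv_mul_le_iff₀ (by positivity)]
  linarith

lemma norm_slope_sub_slope_le_same_left (hf : LipschitzOnWith 1 f I)
    (hlow : ∀ s ∈ I, ∀ t ∈ I, dist s t - C * dist s t ^ 3 ≤ dist (f s) (f t)) (hC : 0 ≤ C)
    {a v b : ℝ} (ha : a ∈ I) (hb : b ∈ I) (hav : a < v) (hvb : v ≤ b) :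
    ‖slope f a v - slope f a b‖ ≤ 2 * √(2 * C) * (b - a) := by
  suffices key : ∀ k : ℕ, ∀ b ∈ I, v ≤ b → b - a ≤ 2 ^ k * (v - a) →
      ‖slope f a v - slope f a b‖ ≤ 2 * √(2 * C) * (b - a) by
    obtain ⟨k, hk⟩ := pow_unbounded_of_one_lt ((b - a) / (v - a)) one_lt_two
    exact key k b hb hvb ((div_lt_iff₀ (sub_pos.2 hav)).1 hk).le
  intro k
  induction k with
  | zero =>
    intro b hb hvb hk
    obtain rfl : b = v := le_antisymm (by simpa using hk) hvb
    simp only [sub_self, norm_zero]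
    exact mul_nonneg (by positivity) (sub_pos.2 hav).le
  | succ k ih =>
    intro b hb hvb hk
    have hB := Real.sqrt_nonneg (2 * C)
    by_cases h2 : b - a ≤ 2 * (v - a)
    · have := norm_slope_sub_slope_le_of_le_two_mul hf hlow hC ha hb hav hvb h2
      nlinarith
    · have hm : (a + b) / 2 ∈ I := Set.OrdConnected.out' ha hb ⟨by linarith, by linarith⟩
      have hleft := ih ((a + b) / 2) hm (by linarith) (by rw [pow_succ] at hk; linarith)
      have hhalf := norm_slope_sub_slope_le_of_le_two_mul hf hlow hC ha hb (m := (a + b) / 2)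
        (by linarith) (by linarith) (by linarith)
      calc ‖slope f a v - slope f a b‖
          ≤ ‖slope f a v - slope f a ((a + b) / 2)‖ + ‖slope f a ((a + b) / 2) - slope f a b‖ :=
            norm_sub_le_norm_sub_add_norm_sub _ _ _
        _ ≤ 2 * √(2 * C) * ((a + b) / 2 - a) + √(2 * C) * (b - a) := add_le_add hleft hhalf
        _ = 2 * √(2 * C) * (b - a) := by ring

lemma norm_slope_sub_slope_le_same_right (hf : LipschitzOnWith 1 f I)
    (hlow : ∀ s ∈ I, ∀ t ∈ I, dist s t - C * dist s t ^ 3 ≤ dist (f s) (f t)) (hC : 0 ≤ C)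
    {a u b : ℝ} (ha : a ∈ I) (hb : b ∈ I) (hau : a ≤ u) (hub : u < b) :
    ‖slope f u b - slope f a b‖ ≤ 2 * √(2 * C) * (b - a) := by
  have : (Neg.neg ⁻¹' I).OrdConnected := ‹I.OrdConnected›.preimage_anti fun _ _ h => neg_le_neg h
  have hf' : LipschitzOnWith 1 (fun x => f (-x)) (Neg.neg ⁻¹' I) :=
    LipschitzOnWith.of_dist_le_mul fun x hx y hy => by
      simpa [dist_neg_neg] using hf.dist_le_mul (-x) hx (-y) hy
  have hlow' : ∀ s ∈ Neg.neg ⁻¹' I, ∀ t ∈ Neg.neg ⁻¹' I,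
      dist s t - C * dist s t ^ 3 ≤ dist (f (-s)) (f (-t)) := fun s hs t ht => by
    simpa [dist_neg_neg] using hlow (-s) hs (-t) ht
  have hslope : ∀ x y, slope (fun x => f (-x)) x y = -slope f (-x) (-y) := fun x y => by
    rw [slope_def_module, slope_def_module, show -y - -x = -(y - x) by ring, inv_neg, neg_smul,
      neg_neg]
  have := norm_slope_sub_slope_le_same_left hf' hlow' hC (a := -b) (v := -u) (b := -a)
    (by simpa using hb) (by simpa using ha) (by linarith) (by linarith)
  rw [hslope, hslope, neg_neg, neg_neg, neg_neg, slope_comm f b u, slope_comm f b a,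
    neg_sub_neg, norm_sub_rev] at this
  linarith

lemma norm_slope_sub_slope_le_of_mem_Icc (hf : LipschitzOnWith 1 f I)
    (hlow : ∀ s ∈ I, ∀ t ∈ I, dist s t - C * dist s t ^ 3 ≤ dist (f s) (f t)) (hC : 0 ≤ C)
    {a b u v : ℝ} (ha : a ∈ I) (hb : b ∈ I) (hu : u ∈ Icc a b) (hv : v ∈ Icc a b) (huv : u ≠ v) :
    ‖slope f u v - slope f a b‖ ≤ 4 * √(2 * C) * (b - a) := by
  wlog hlt : u < v generalizing u v
  · rw [slope_comm]
    exact this hv hu huv.symm (huv.symm.lt_of_le (not_lt.1 hlt))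
  have hu' : u ∈ I := Set.OrdConnected.out' ha hb hu
  calc ‖slope f u v - slope f a b‖ ≤ ‖slope f u v - slope f u b‖ + ‖slope f u b - slope f a b‖ :=
        norm_sub_le_norm_sub_add_norm_sub _ _ _
    _ ≤ 2 * √(2 * C) * (b - u) + 2 * √(2 * C) * (b - a) :=
        add_le_add (norm_slope_sub_slope_le_same_left hf hlow hC hu' hb hlt hv.2)
          (norm_slope_sub_slope_le_same_right hf hlow hC ha hb hu.1 (hlt.trans_le hv.2))
    _ ≤ 4 * √(2 * C) * (b - a) := by nlinarith [Real.sqrt_nonneg (2 * C), hu.1]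

lemma norm_slope_sub_slope_le_of_mem (hf : LipschitzOnWith 1 f I)
    (hlow : ∀ s ∈ I, ∀ t ∈ I, dist s t - C * dist s t ^ 3 ≤ dist (f s) (f t)) (hC : 0 ≤ C)
    {t x y : ℝ} (ht : t ∈ I) (hx : x ∈ I) (hy : y ∈ I) (hxt : x ≠ t) (hyt : y ≠ t) :
    ‖slope f t x - slope f t y‖ ≤ 8 * √(2 * C) * |x - t| + 8 * √(2 * C) * |y - t| := by
  set a := min (min x y) t
  set b := max (max x y) t
  have ha : a ∈ I := by simp only [a, min_def]; split_ifs <;> assumption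
  have hb : b ∈ I := by simp only [b, max_def]; split_ifs <;> assumption
  have hab : b - a ≤ |x - t| + |y - t| := by
    have := le_abs_self (x - t); have := neg_abs_le (x - t)
    have := le_abs_self (y - t); have := neg_abs_le (y - t)
    simp only [a, b, min_def, max_def]; split_ifs <;> linarith
  have htI : t ∈ Icc a b := ⟨min_le_right _ _, le_max_right _ _⟩
  have hxI : x ∈ Icc a b :=
    ⟨(min_le_left _ _).trans (min_le_left _ _), (le_max_left _ _).trans (le_max_left _ _)⟩
  have hyI : y ∈ Icc a b :=
    ⟨(min_le_left _ _).trans (min_le_right _ _), (le_max_right _ _).trans (le_max_left _ _)⟩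
  calc ‖slope f t x - slope f t y‖ ≤ ‖slope f t x - slope f a b‖ + ‖slope f t y - slope f a b‖ :=
        (norm_sub_le_norm_sub_add_norm_sub _ (slope f a b) _).trans_eq
          (by rw [norm_sub_rev (slope f a b)])
    _ ≤ 4 * √(2 * C) * (b - a) + 4 * √(2 * C) * (b - a) :=
        add_le_add (norm_slope_sub_slope_le_of_mem_Icc hf hlow hC ha hb htI hxI hxt.symm)
          (norm_slope_sub_slope_le_of_mem_Icc hf hlow hC ha hb htI hyI hyt.symm)
    _ ≤ 8 * √(2 * C) * |x - t| + 8 * √(2 * C) * |y - t| := by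
        nlinarith [Real.sqrt_nonneg (2 * C)]

lemma exists_tendsto_slope (hf : LipschitzOnWith 1 f I)
    (hlow : ∀ s ∈ I, ∀ t ∈ I, dist s t - C * dist s t ^ 3 ≤ dist (f s) (f t)) (hC : 0 ≤ C)
    [CompleteSpace E] {t : ℝ} (ht : t ∈ I) :
    ∃ f't : E, Tendsto (slope f t) (𝓝[I \ {t}] t) (𝓝 f't) ∧
      ∀ x ∈ I, x ≠ t → ‖slope f t x - f't‖ ≤ 8 * √(2 * C) * |x - t| := by
  by_cases hI : ∃ x ∈ I, x ≠ t
  · obtain ⟨x, hx, hxt⟩ := hI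
    have : (𝓝[I \ {t}] t).NeBot := by
      rcases hxt.lt_or_gt with hlt | hlt
      · refine (right_nhdsWithin_Ioo_neBot hlt).mono (nhdsWithin_mono _ fun y hy => ?_)
        exact ⟨Set.OrdConnected.out' hx ht ⟨hy.1.le, hy.2.le⟩, hy.2.ne⟩
      · refine (left_nhdsWithin_Ioo_neBot hlt).mono (nhdsWithin_mono _ fun y hy => ?_)
        exact ⟨Set.OrdConnected.out' ht hx ⟨hy.1.le, hy.2.le⟩, hy.1.ne'⟩
    have hr : Tendsto (fun x => 8 * √(2 * C) * |x - t|) (𝓝[I \ {t}] t) (𝓝 0) :=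
      tendsto_nhdsWithin_of_tendsto_nhds (by
        simpa using ((continuous_sub_right t).abs.const_mul (8 * √(2 * C))).tendsto t)
    obtain ⟨f't, hlim, hbound⟩ :=
      exists_tendsto_forall_dist_le (g := slope f t) self_mem_nhdsWithin hr fun x hx y hy => by
        simpa [dist_eq_norm] using norm_slope_sub_slope_le_of_mem hf hlow hC ht hx.1 hy.1 hx.2 hy.2
    exact ⟨f't, hlim, fun x hx hxt => by simpa [dist_eq_norm] using hbound x ⟨hx, hxt⟩⟩
  · push Not at hI
    have : I \ {t} = ∅ := by ext x; simpa using hI x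
    exact ⟨0, by simp [this], fun x hx hxt => (hxt (hI x hx)).elim⟩

theorem exists_hasDerivWithinAt_lipschitzOnWith (hf : LipschitzOnWith 1 f I)
    (hlow : ∀ s ∈ I, ∀ t ∈ I, dist s t - C * dist s t ^ 3 ≤ dist (f s) (f t)) (hC : 0 ≤ C)
    [CompleteSpace E] :
    ∃ f' : ℝ → E, (∀ t ∈ I, HasDerivWithinAt f (f' t) I t) ∧
      LipschitzOnWith (Real.toNNReal (16 * √(2 * C))) f' I := by
  choose! f' hderiv hbound using fun t (ht : t ∈ I) => exists_tendsto_slope hf hlow hC ht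
  refine ⟨f', fun t ht => hasDerivWithinAt_iff_tendsto_slope.2 (hderiv t ht),
    LipschitzOnWith.of_dist_le' fun s hs t ht => ?_⟩
  rcases eq_or_ne s t with rfl | hst
  · simp
  calc dist (f' s) (f' t) ≤ ‖slope f s t - f' s‖ + ‖slope f t s - f' t‖ := by
        rw [dist_eq_norm, slope_comm f t s, norm_sub_rev (slope f s t)]
        exact norm_sub_le_norm_sub_add_norm_sub _ _ _
    _ ≤ 8 * √(2 * C) * |t - s| + 8 * √(2 * C) * |s - t| :=
        add_le_add (hbound s hs t ht hst.symm) (hbound t ht s hs hst)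
    _ = 16 * √(2 * C) * dist s t := by rw [Real.dist_eq, abs_sub_comm t s]; ring

end InnerProductSpace

theorem chordConvex_majorizer_C11_general
    (n : ℕ) (ℓ : ℝ) (L : NNReal)
    (γ γ' : ℝ → EuclideanSpace ℝ (Fin n))
    (σ : ℝ → EuclideanSpace ℝ (Fin 2))
    -- `γ` is a unit-speed curve with `L`-Lipschitz derivative
    (hd : ∀ t ∈ Icc (0:ℝ) ℓ, HasDerivWithinAt γ (γ' t) (Icc 0 ℓ) t)
    (hu : ∀ t ∈ Icc (0:ℝ) ℓ, ‖γ' t‖ = 1)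
    (hlip : LipschitzOnWith L γ' (Icc 0 ℓ))
    -- `σ` is parametrized by arclength
    (hσlip : LipschitzOnWith 1 σ (Icc 0 ℓ))
    -- `σ` majorizes `γ`
    (hmaj : ∀ s ∈ Icc (0:ℝ) ℓ, ∀ t ∈ Icc (0:ℝ) ℓ, ‖γ s - γ t‖ ≤ ‖σ s - σ t‖) :
    ∃ σ' : ℝ → EuclideanSpace ℝ (Fin 2),
      (∀ t ∈ Icc (0:ℝ) ℓ, HasDerivWithinAt σ (σ' t) (Icc 0 ℓ) t) ∧
      ∃ K : NNReal, LipschitzOnWith K σ' (Icc 0 ℓ) := by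
  have hchord : ∀ s ∈ Icc (0:ℝ) ℓ, ∀ t ∈ Icc (0:ℝ) ℓ,
      dist s t - (L : ℝ) ^ 2 / 6 * dist s t ^ 3 ≤ dist (σ s) (σ t) := fun s hs t ht =>
    (dist_sub_cube_le_dist_of_unitSpeed hd hu hlip s hs t ht).trans
      (by simpa only [dist_eq_norm] using hmaj s hs t ht)
  obtain ⟨σ', hσ', hσ'lip⟩ := exists_hasDerivWithinAt_lipschitzOnWith hσlip hchord (by positivity)
  exact ⟨σ', hσ', _, hσ'lip⟩

/-- **`C^{1,1}` regularity of chord-convex majorizers (Lemma 4.6, regularity part,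
Euclidean case).** If `γ` is a unit-speed curve in `ℝⁿ` with `L`-Lipschitz derivative
and `σ` is a chord-convex planar curve parametrized by arclength which majorizes `γ`,
then `σ` is differentiable everywhere on `[0, ℓ]` with Lipschitz derivative. -/
theorem chordConvex_majorizer_C11
    (n : ℕ) (ℓ : ℝ) (hℓ : 0 < ℓ) (L : NNReal)
    (γ γ' : ℝ → EuclideanSpace ℝ (Fin n))
    (σ : ℝ → EuclideanSpace ℝ (Fin 2))
    -- `γ` is a unit-speed curve with `L`-Lipschitz derivative
    (hd : ∀ t ∈ Icc (0:ℝ) ℓ, HasDerivWithinAt γ (γ' t) (Icc 0 ℓ) t)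
    (hu : ∀ t ∈ Icc (0:ℝ) ℓ, ‖γ' t‖ = 1)
    (hlip : LipschitzOnWith L γ' (Icc 0 ℓ))
    -- `σ` is chord-convex
    (hinj : InjOn σ (Ico 0 ℓ))
    (hcc : σ '' Icc 0 ℓ ∪ segment ℝ (σ ℓ) (σ 0)
      = frontier (convexHull ℝ (σ '' Icc 0 ℓ)))
    -- `σ` is parametrized by arclength
    (hσlip : LipschitzOnWith 1 σ (Icc 0 ℓ))
    (hlen : eVariationOn σ (Icc 0 ℓ) = ENNReal.ofReal ℓ)
    -- `σ` majorizes `γ`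
    (hmaj : ∀ s ∈ Icc (0:ℝ) ℓ, ∀ t ∈ Icc (0:ℝ) ℓ, ‖γ s - γ t‖ ≤ ‖σ s - σ t‖) :
    ∃ σ' : ℝ → EuclideanSpace ℝ (Fin 2),
      (∀ t ∈ Icc (0:ℝ) ℓ, HasDerivWithinAt σ (σ' t) (Icc 0 ℓ) t) ∧
      ∃ K : NNReal, LipschitzOnWith K σ' (Icc 0 ℓ) :=
  chordConvex_majorizer_C11_general n ℓ L γ γ' σ hd hu hlip hσlip hmaj
end

section
/- Let ℓ > 0, let γ : [0,ℓ] → ℝⁿ be a C¹ unit-speed curve whose derivative γ′ is L-Lipschitz, and let γ̃ : [0,ℓ] → ℝ² be a chord-convex C¹ unit-speed curve whose derivative γ̃′ is Lipschitz and which majorizes γ. Then at every t ∈ (0,ℓ) at which both γ′ and γ̃′ are differentiable (hence at almost every t), the geodesic curvatures satisfy ‖γ̃″(t)‖ ≤ ‖γ″(t)‖. (Curvature-comparison part of the paper's Lemma 4.6, Euclidean case.) -/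
/-!
For a unit-speed curve `f` the chord defect is a double integral,
`(b - a)² - ‖f b - f a‖² = ½ ∫∫ ‖f' u - f' v‖² du dv` over `[a, b]²`.
Near a point `t` where `f'` is differentiable, `f' u - f' v = (u - v) f''(t) + o(h)` on
`[t, t + h]`, so the defect is `‖f''(t)‖² h⁴ / 12 + o(h⁴)`.
A majorizer has chords at least as long as those of `γ`, hence a defect at most as large,
and comparing the `h⁴` coefficients gives the curvature inequality.
-/

open Set MeasureTheory intervalIntegral RealInnerProductSpace Filter Topology Asymptotics Interval

theorem abs_norm_sq_sub_norm_sq_le {E : Type*} [SeminormedAddCommGroup E] (x y : E) :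
    |‖x‖ ^ 2 - ‖y‖ ^ 2| ≤ (2 * ‖y‖ + ‖x - y‖) * ‖x - y‖ := by
  have hdiff := abs_norm_sub_norm_le x y
  have hx : ‖x‖ ≤ ‖y‖ + ‖x - y‖ := norm_le_norm_add_norm_sub' x y
  rw [show ‖x‖ ^ 2 - ‖y‖ ^ 2 = (‖x‖ + ‖y‖) * (‖x‖ - ‖y‖) by ring, abs_mul,
    abs_of_nonneg (by positivity)]
  exact mul_le_mul (by linarith) hdiff (abs_nonneg _) (by positivity)

theorem abs_integral_sub_integral_le {f g : ℝ → ℝ} {a b M : ℝ}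
    (hf : IntervalIntegrable f volume a b) (hg : IntervalIntegrable g volume a b)
    (h : ∀ x ∈ Ι a b, |f x - g x| ≤ M) :
    |(∫ x in a..b, f x) - ∫ x in a..b, g x| ≤ M * |b - a| := by
  rw [← integral_sub hf hg, ← Real.norm_eq_abs]
  exact norm_integral_le_of_norm_le_const h

theorem integral_sub_sq (u a b : ℝ) :
    ∫ v in a..b, (u - v) ^ 2 = ((u - a) ^ 3 - (u - b) ^ 3) / 3 := by
  rw [integral_comp_sub_left (fun x => x ^ 2), integral_pow]
  norm_num

theorem integral_cube_sub_cube (a b : ℝ) :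
    ∫ u in a..b, ((u - a) ^ 3 - (u - b) ^ 3) = (b - a) ^ 4 / 2 := by
  rw [integral_sub ((by fun_prop : Continuous fun u : ℝ => (u - a) ^ 3).intervalIntegrable _ _)
    ((by fun_prop : Continuous fun u : ℝ => (u - b) ^ 3).intervalIntegrable _ _),
    integral_comp_sub_right (fun x => x ^ 3), integral_comp_sub_right (fun x => x ^ 3),
    integral_pow, integral_pow]
  norm_num
  ring

theorem Asymptotics.IsLittleO.nonpos_of_const_mul_le {α : Type*} {l : Filter α} [l.NeBot]
    {g φ : α → ℝ} {c : ℝ} (hg : g =o[l] φ) (hφ : ∀ᶠ x in l, 0 < φ x)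
    (hle : ∀ᶠ x in l, c * φ x ≤ g x) : c ≤ 0 := by
  by_contra! hc
  obtain ⟨x, hgx, hφx, hlex⟩ := ((hg.def (half_pos hc)).and (hφ.and hle)).exists
  rw [Real.norm_eq_abs, Real.norm_eq_abs, abs_of_pos hφx] at hgx
  nlinarith [le_abs_self (g x), mul_pos hc hφx]

theorem eventually_forall_Icc_add_of_eventually_nhdsGE {P : ℝ → Prop} {t : ℝ}
    (hP : ∀ᶠ u in 𝓝[≥] t, P u) : ∀ᶠ h in 𝓝[>] 0, ∀ u ∈ Icc t (t + h), P u := by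
  obtain ⟨δ, hδ, hsub⟩ := mem_nhdsGE_iff_exists_Icc_subset.mp hP
  filter_upwards [Ioo_mem_nhdsGT (sub_pos.2 hδ)] with h hh u hu
  exact hsub ⟨hu.1, by linarith [hu.2, hh.2]⟩

section InnerProductSpace

variable {E : Type*} [NormedAddCommGroup E] [InnerProductSpace ℝ E]

section UnitVectorField

variable {w : ℝ → E} {a b : ℝ}

theorem IntervalIntegrable.const_inner (hw : IntervalIntegrable w volume a b) (x : E) :
    IntervalIntegrable (fun v => ⟪x, w v⟫) volume a b :=
  ⟨hw.1.const_inner x, hw.2.const_inner x⟩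

theorem integral_inner_left [CompleteSpace E] (hw : IntervalIntegrable w volume a b) (x : E) :
    ∫ v in a..b, ⟪x, w v⟫ = ⟪x, ∫ v in a..b, w v⟫ :=
  (innerSL ℝ x).intervalIntegral_comp_comm hw

theorem integral_sub_inner_integral [CompleteSpace E] (hw : IntervalIntegrable w volume a b) :
    ∫ u in a..b, ((b - a) - ⟪w u, ∫ v in a..b, w v⟫)
      = (b - a) ^ 2 - ‖∫ v in a..b, w v‖ ^ 2 := by
  simp_rw [real_inner_comm _ (w _)]
  rw [integral_sub intervalIntegrable_const (hw.const_inner _), integral_inner_left hw,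
    real_inner_self_eq_norm_sq, intervalIntegral.integral_const, smul_eq_mul]
  ring

theorem integral_norm_sub_sq_div_two [CompleteSpace E] (hw : IntervalIntegrable w volume a b)
    (hunit : ∀ v ∈ uIcc a b, ‖w v‖ = 1) {x : E} (hx : ‖x‖ = 1) :
    ∫ v in a..b, ‖x - w v‖ ^ 2 / 2 = (b - a) - ⟪x, ∫ v in a..b, w v⟫ := by
  have hpolar : EqOn (fun v => ‖x - w v‖ ^ 2 / 2) (fun v => 1 - ⟪x, w v⟫) (uIcc a b) := by
    intro v hv
    simp only [norm_sub_sq_real, hx, hunit v hv]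
    ring
  rw [integral_congr hpolar, integral_sub intervalIntegrable_const (hw.const_inner x),
    integral_inner_left hw]
  simp

theorem abs_sq_sub_norm_integral_sq_sub_le [CompleteSpace E] {κ M : ℝ}
    (hw : ContinuousOn w (uIcc a b)) (hunit : ∀ u ∈ uIcc a b, ‖w u‖ = 1)
    (hM : ∀ u ∈ uIcc a b, ∀ v ∈ uIcc a b, |‖w u - w v‖ ^ 2 - κ ^ 2 * (u - v) ^ 2| ≤ M) :
    |(b - a) ^ 2 - ‖∫ u in a..b, w u‖ ^ 2 - κ ^ 2 * (b - a) ^ 4 / 12|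
      ≤ M / 2 * (b - a) ^ 2 := by
  have hwi : IntervalIntegrable w volume a b := hw.intervalIntegrable
  set c := ∫ u in a..b, w u
  have hrow : ∀ u ∈ uIcc a b,
      |((b - a) - ⟪w u, c⟫) - κ ^ 2 * ((u - a) ^ 3 - (u - b) ^ 3) / 6| ≤ M / 2 * |b - a| := by
    intro u hu
    have hpoly : ∫ v in a..b, κ ^ 2 * (u - v) ^ 2 / 2
        = κ ^ 2 * ((u - a) ^ 3 - (u - b) ^ 3) / 6 := by
      rw [intervalIntegral.integral_div, intervalIntegral.integral_const_mul, integral_sub_sq]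
      ring
    rw [← integral_norm_sub_sq_div_two hwi hunit (hunit u hu), ← hpoly]
    refine abs_integral_sub_integral_le ?_ ?_ fun v hv => ?_
    · exact ContinuousOn.intervalIntegrable (by fun_prop)
    · exact Continuous.intervalIntegrable (by fun_prop) _ _
    · rw [← sub_div, abs_div, abs_two]
      exact div_le_div_of_nonneg_right (hM u hu v (uIoc_subset_uIcc hv)) zero_le_two
  have hpoly : ∫ u in a..b, κ ^ 2 * ((u - a) ^ 3 - (u - b) ^ 3) / 6
      = κ ^ 2 * (b - a) ^ 4 / 12 := by
    rw [intervalIntegral.integral_div, intervalIntegral.integral_const_mul, integral_cube_sub_cube]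
    ring
  calc _ = |(∫ u in a..b, ((b - a) - ⟪w u, c⟫))
          - ∫ u in a..b, κ ^ 2 * ((u - a) ^ 3 - (u - b) ^ 3) / 6| := by
        rw [integral_sub_inner_integral hwi, hpoly]
    _ ≤ M / 2 * |b - a| * |b - a| :=
        abs_integral_sub_integral_le (ContinuousOn.intervalIntegrable (by fun_prop))
          (Continuous.intervalIntegrable (by fun_prop) _ _)
          fun u hu => hrow u (uIoc_subset_uIcc hu)
    _ = M / 2 * (b - a) ^ 2 := by rw [mul_assoc, ← sq, sq_abs]

end UnitVectorField

section Curve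

variable {f f' : ℝ → E} {f'' : E} {t b : ℝ}

theorem abs_norm_sub_sq_sub_le_of_taylor {h ε u v : ℝ} (hε : 0 ≤ ε)
    (hu : u ∈ Icc t (t + h)) (hv : v ∈ Icc t (t + h))
    (hf'u : ‖f' u - f' t - (u - t) • f''‖ ≤ ε * (u - t))
    (hf'v : ‖f' v - f' t - (v - t) • f''‖ ≤ ε * (v - t)) :
    |‖f' u - f' v‖ ^ 2 - ‖f''‖ ^ 2 * (u - v) ^ 2| ≤ 4 * ε * (‖f''‖ + ε) * h ^ 2 := by
  have hh : 0 ≤ h := by linarith [hu.1, hu.2]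
  have hdiff : ‖(f' u - f' v) - (u - v) • f''‖ ≤ 2 * ε * h :=
    calc ‖(f' u - f' v) - (u - v) • f''‖
        = ‖(f' u - f' t - (u - t) • f'') - (f' v - f' t - (v - t) • f'')‖ := by
          congr 1; module
      _ ≤ ε * (u - t) + ε * (v - t) := norm_sub_le_of_le hf'u hf'v
      _ ≤ 2 * ε * h := by nlinarith [hu.2, hv.2]
  have hlin : ‖(u - v) • f''‖ ≤ h * ‖f''‖ := by
    rw [norm_smul, Real.norm_eq_abs]
    gcongr
    exact abs_sub_le_iff.2 ⟨by linarith [hu.2, hv.1], by linarith [hu.1, hv.2]⟩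
  calc |‖f' u - f' v‖ ^ 2 - ‖f''‖ ^ 2 * (u - v) ^ 2|
      = |‖f' u - f' v‖ ^ 2 - ‖(u - v) • f''‖ ^ 2| := by
        rw [norm_smul, Real.norm_eq_abs, mul_pow, sq_abs, mul_comm]
    _ ≤ (2 * ‖(u - v) • f''‖ + ‖(f' u - f' v) - (u - v) • f''‖)
          * ‖(f' u - f' v) - (u - v) • f''‖ :=
        abs_norm_sq_sub_norm_sq_le _ _
    _ ≤ (2 * (h * ‖f''‖) + 2 * ε * h) * (2 * ε * h) := by gcongr
    _ = 4 * ε * (‖f''‖ + ε) * h ^ 2 := by ring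

variable [CompleteSpace E]

theorem eventually_abs_chord_defect_le (htb : t < b)
    (hf : ∀ u ∈ Icc t b, HasDerivWithinAt f (f' u) (Icc t b) u)
    (hf' : ContinuousOn f' (Icc t b)) (hunit : ∀ u ∈ Icc t b, ‖f' u‖ = 1)
    (hf'' : HasDerivWithinAt f' f'' (Icc t b) t) {ε : ℝ} (hε : 0 < ε) :
    ∀ᶠ h in 𝓝[>] 0, |h ^ 2 - ‖f (t + h) - f t‖ ^ 2 - ‖f''‖ ^ 2 * h ^ 4 / 12|
      ≤ 2 * ε * (‖f''‖ + ε) * h ^ 4 := by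
  have htaylor : ∀ᶠ u in 𝓝[≥] t,
      u ∈ Ico t b ∧ ‖f' u - f' t - (u - t) • f''‖ ≤ ε * (u - t) := by
    rw [← nhdsWithin_Icc_eq_nhdsGE htb]
    filter_upwards [(hasDerivWithinAt_iff_isLittleO.mp hf'').def hε,
      nhdsWithin_Icc_eq_nhdsGE htb ▸ Ico_mem_nhdsGE htb] with u hu hub
    exact ⟨hub, by rwa [Real.norm_eq_abs, abs_of_nonneg (sub_nonneg.2 hub.1)] at hu⟩
  filter_upwards [eventually_forall_Icc_add_of_eventually_nhdsGE htaylor, self_mem_nhdsWithin]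
    with h hwin (hh : 0 < h)
  have hsub : Icc t (t + h) ⊆ Icc t b := fun u hu => ⟨hu.1, (hwin u hu).1.2.le⟩
  have hI : uIcc t (t + h) = Icc t (t + h) := uIcc_of_le (by linarith)
  have hchord : ∫ u in t..t + h, f' u = f (t + h) - f t := by
    refine integral_eq_sub_of_hasDerivAt_of_le (by linarith)
      (fun u hu => ((hf u (hsub hu)).continuousWithinAt).mono hsub) (fun u hu => ?_)
      (hI ▸ hf'.mono hsub).intervalIntegrable
    exact (hf u (hsub (Ioo_subset_Icc_self hu))).hasDerivAt
      (Icc_mem_nhds hu.1 (hu.2.trans (hwin _ (right_mem_Icc.2 (by linarith))).1.2))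
  have hbound := abs_sq_sub_norm_integral_sq_sub_le (hI ▸ hf'.mono hsub)
    (fun u hu => hunit u (hsub (hI ▸ hu))) (κ := ‖f''‖) fun u hu v hv =>
      abs_norm_sub_sq_sub_le_of_taylor hε.le (hI ▸ hu) (hI ▸ hv) (hwin u (hI ▸ hu)).2
        (hwin v (hI ▸ hv)).2
  rw [hchord, add_sub_cancel_left] at hbound
  linarith

theorem chord_defect_isLittleO (htb : t < b)
    (hf : ∀ u ∈ Icc t b, HasDerivWithinAt f (f' u) (Icc t b) u)
    (hf' : ContinuousOn f' (Icc t b)) (hunit : ∀ u ∈ Icc t b, ‖f' u‖ = 1)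
    (hf'' : HasDerivWithinAt f' f'' (Icc t b) t) :
    (fun h => h ^ 2 - ‖f (t + h) - f t‖ ^ 2 - ‖f''‖ ^ 2 * h ^ 4 / 12)
      =o[𝓝[>] 0] fun h => h ^ 4 := by
  refine isLittleO_iff.2 fun c hc => ?_
  have hsmall : Tendsto (fun ε : ℝ => 2 * ε * (‖f''‖ + ε)) (𝓝[>] 0) (𝓝 0) :=
    tendsto_nhdsWithin_of_tendsto_nhds (by simpa using (Continuous.tendsto (by fun_prop) 0 :
      Tendsto (fun ε : ℝ => 2 * ε * (‖f''‖ + ε)) (𝓝 0) _))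
  obtain ⟨ε, hεc, hε⟩ := ((hsmall.eventually (ge_mem_nhds hc)).and self_mem_nhdsWithin).exists
  filter_upwards [eventually_abs_chord_defect_le htb hf hf' hunit hf'' hε] with h hh
  rw [Real.norm_eq_abs, Real.norm_eq_abs, abs_of_nonneg (by positivity : (0 : ℝ) ≤ h ^ 4)]
  exact hh.trans (by gcongr)

end Curve

end InnerProductSpace

theorem chordConvex_majorizer_curvature_le_general
    (n : ℕ) (ℓ : ℝ)
    (γ γ' : ℝ → EuclideanSpace ℝ (Fin n))
    (σ σ' : ℝ → EuclideanSpace ℝ (Fin 2))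
    -- `γ` is a `C¹` unit-speed curve with `L`-Lipschitz derivative
    (hd : ∀ t ∈ Icc (0:ℝ) ℓ, HasDerivWithinAt γ (γ' t) (Icc 0 ℓ) t)
    (hu : ∀ t ∈ Icc (0:ℝ) ℓ, ‖γ' t‖ = 1)
    (hc : ContinuousOn γ' (Icc 0 ℓ))
    -- `σ` is a `C¹` unit-speed curve with Lipschitz derivative
    (hσd : ∀ t ∈ Icc (0:ℝ) ℓ, HasDerivWithinAt σ (σ' t) (Icc 0 ℓ) t)
    (hσu : ∀ t ∈ Icc (0:ℝ) ℓ, ‖σ' t‖ = 1)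
    (hσc : ContinuousOn σ' (Icc 0 ℓ))
    -- `σ` majorizes `γ`
    (hmaj : ∀ s ∈ Icc (0:ℝ) ℓ, ∀ t ∈ Icc (0:ℝ) ℓ, ‖γ s - γ t‖ ≤ ‖σ s - σ t‖) :
    ∀ t ∈ Ioo (0:ℝ) ℓ,
      ∀ γ'' : EuclideanSpace ℝ (Fin n), ∀ σ'' : EuclideanSpace ℝ (Fin 2),
        HasDerivWithinAt γ' γ'' (Icc 0 ℓ) t →
        HasDerivWithinAt σ' σ'' (Icc 0 ℓ) t →
        ‖σ''‖ ≤ ‖γ''‖ := by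
  intro t ht γ'' σ'' hγ'' hσ''
  have hsub : Icc t ℓ ⊆ Icc 0 ℓ := Icc_subset_Icc_left ht.1.le
  have hγ := chord_defect_isLittleO ht.2 (fun s hs => (hd s (hsub hs)).mono hsub)
    (hc.mono hsub) (fun s hs => hu s (hsub hs)) (hγ''.mono hsub)
  have hσ := chord_defect_isLittleO ht.2 (fun s hs => (hσd s (hsub hs)).mono hsub)
    (hσc.mono hsub) (fun s hs => hσu s (hsub hs)) (hσ''.mono hsub)
  have hchord : ∀ᶠ h in 𝓝[>] 0, ‖γ (t + h) - γ t‖ ^ 2 ≤ ‖σ (t + h) - σ t‖ ^ 2 := by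
    filter_upwards [Ioo_mem_nhdsGT (sub_pos.2 ht.2)] with h hh
    gcongr
    exact hmaj _ ⟨by linarith [ht.1, hh.1], by linarith [hh.2]⟩ t (Ioo_subset_Icc_self ht)
  have hcurv := (hγ.sub hσ).nonpos_of_const_mul_le (c := (‖σ''‖ ^ 2 - ‖γ''‖ ^ 2) / 12)
    (eventually_mem_nhdsWithin.mono fun h (hh : 0 < h) => by positivity)
    (hchord.mono fun h hh => by linarith)
  rw [← sq_le_sq₀ (norm_nonneg _) (norm_nonneg _)]
  linarith

/-- **Curvature comparison for chord-convex majorizers (Lemma 4.6, curvature part,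
Euclidean case).** If `γ` is a `C¹` unit-speed curve with `L`-Lipschitz derivative,
and `σ` is a chord-convex `C¹` unit-speed planar curve with Lipschitz derivative
which majorizes `γ`, then at every interior point where both second derivatives exist,
the curvature of `σ` is at most that of `γ`. -/
theorem chordConvex_majorizer_curvature_le
    (n : ℕ) (ℓ : ℝ) (hℓ : 0 < ℓ) (L K : NNReal)
    (γ γ' : ℝ → EuclideanSpace ℝ (Fin n))
    (σ σ' : ℝ → EuclideanSpace ℝ (Fin 2))
    -- `γ` is a `C¹` unit-speed curve with `L`-Lipschitz derivative
    (hd : ∀ t ∈ Icc (0:ℝ) ℓ, HasDerivWithinAt γ (γ' t) (Icc 0 ℓ) t)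
    (hu : ∀ t ∈ Icc (0:ℝ) ℓ, ‖γ' t‖ = 1)
    (hc : ContinuousOn γ' (Icc 0 ℓ))
    (hlip : LipschitzOnWith L γ' (Icc 0 ℓ))
    -- `σ` is a `C¹` unit-speed curve with Lipschitz derivative
    (hσd : ∀ t ∈ Icc (0:ℝ) ℓ, HasDerivWithinAt σ (σ' t) (Icc 0 ℓ) t)
    (hσu : ∀ t ∈ Icc (0:ℝ) ℓ, ‖σ' t‖ = 1)
    (hσc : ContinuousOn σ' (Icc 0 ℓ))
    (hσlip : LipschitzOnWith K σ' (Icc 0 ℓ))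
    -- `σ` is chord-convex
    (hinj : InjOn σ (Ico 0 ℓ))
    (hcc : σ '' Icc 0 ℓ ∪ segment ℝ (σ ℓ) (σ 0)
      = frontier (convexHull ℝ (σ '' Icc 0 ℓ)))
    -- `σ` majorizes `γ`
    (hmaj : ∀ s ∈ Icc (0:ℝ) ℓ, ∀ t ∈ Icc (0:ℝ) ℓ, ‖γ s - γ t‖ ≤ ‖σ s - σ t‖) :
    ∀ t ∈ Ioo (0:ℝ) ℓ,
      ∀ γ'' : EuclideanSpace ℝ (Fin n), ∀ σ'' : EuclideanSpace ℝ (Fin 2),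
        HasDerivWithinAt γ' γ'' (Icc 0 ℓ) t →
        HasDerivWithinAt σ' σ'' (Icc 0 ℓ) t →
        ‖σ''‖ ≤ ‖γ''‖ :=
  chordConvex_majorizer_curvature_le_general n ℓ γ γ' σ σ' hd hu hc hσd hσu hσc hmaj
end

section
/- Let x : [0,ℓ] → ℝ be continuous and let C ≥ 0. Suppose that |x(t+h) − 2x(t) + x(t−h)| ≤ Ch² for every t and every h > 0 with t − h ≥ 0 and t + h ≤ ℓ. Then x is differentiable at every point of (0,ℓ) and its derivative x′ is C-Lipschitz on (0,ℓ). (Second-symmetric-difference lemma proved inside the paper's Lemma 4.6, via convexity of x(t) + Ct²/2 and concavity of x(t) − Ct²/2.) -/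
open Set

/-! Adding `C t² / 2` to `x` makes its symmetric second differences nonnegative, and so does adding
it to `-x`. By a maximum principle, a continuous function with nonnegative symmetric second
differences is convex, so `x + C t² / 2` and `-x + C t² / 2` are convex. Two convex functions whose
sum is differentiable are themselves differentiable (their one-sided derivatives can only jump
upwards, and the jumps cancel), so `x` is differentiable; and the monotonicity of the derivatives
of the two convex functions says that `x' + C t` and `-x' + C t` are nondecreasing, which is the
Lipschitz bound. -/

theorem nonpos_of_symmDiff_nonneg {p q : ℝ} {φ : ℝ → ℝ} (hφ : ContinuousOn φ (Icc p q))
    (hp : φ p ≤ 0) (hq : φ q ≤ 0)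
    (hsd : ∀ t h, 0 < h → p ≤ t - h → t + h ≤ q → 2 * φ t ≤ φ (t + h) + φ (t - h)) :
    ∀ u ∈ Icc p q, φ u ≤ 0 := by
  intro u hu
  by_contra! hu_pos
  obtain ⟨m, hm, hmax⟩ := isCompact_Icc.exists_isMaxOn ⟨u, hu⟩ hφ
  rw [isMaxOn_iff] at hmax
  -- At the largest maximiser `c`, the second difference with step `min (c - p) (q - c)` forces
  -- `φ (c + h)` to be maximal as well.
  have hK : IsCompact (Icc p q ∩ φ ⁻¹' {φ m}) := isCompact_Icc.of_isClosed_subset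
    (hφ.preimage_isClosed_of_isClosed isClosed_Icc isClosed_singleton) inter_subset_left
  obtain ⟨c, ⟨hc, hcm⟩, hc_greatest⟩ := hK.exists_isGreatest ⟨m, hm, rfl⟩
  have hcm : φ c = φ m := hcm
  have hc_pos : 0 < φ c := hcm ▸ hu_pos.trans_le (hmax u hu)
  have hpc : p < c := hc.1.lt_of_ne (by rintro rfl; linarith)
  have hcq : c < q := hc.2.lt_of_ne (by rintro rfl; linarith)
  set h := min (c - p) (q - c)
  have hh : 0 < h := lt_min (by linarith) (by linarith)
  have hhp : h ≤ c - p := min_le_left _ _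
  have hhq : h ≤ q - c := min_le_right _ _
  have hleft := hmax (c - h) ⟨by linarith, by linarith⟩
  have hright := hmax (c + h) ⟨by linarith, by linarith⟩
  have hmid := hsd c h hh (by linarith) (by linarith)
  have : c + h ≤ c := hc_greatest ⟨⟨by linarith, by linarith⟩, le_antisymm hright (by linarith)⟩
  linarith

theorem convexOn_Icc_of_symmDiff_nonneg {a b : ℝ} {g : ℝ → ℝ} (hg : ContinuousOn g (Icc a b))
    (hsd : ∀ t h, 0 < h → a ≤ t - h → t + h ≤ b → 2 * g t ≤ g (t + h) + g (t - h)) :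
    ConvexOn ℝ (Icc a b) g := by
  refine LinearOrder.convexOn_of_lt (convex_Icc a b) fun p hp q hq hpq α β hα hβ hαβ => ?_
  set φ := fun u => g u - (g p + slope g p q * (u - p))
  have hslope : slope g p q * (q - p) = g q - g p := by
    rw [slope_def_field]; field_simp [sub_ne_zero.mpr hpq.ne']
  have hφ : ∀ u ∈ Icc p q, φ u ≤ 0 := by
    refine nonpos_of_symmDiff_nonneg ((hg.mono (Icc_subset_Icc hp.1 hq.2)).sub (by fun_prop))
      (by simp [φ]) (by simp only [φ]; linarith) fun t h hh htp htq => ?_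
    have := hsd t h hh (hp.1.trans htp) (htq.trans hq.2)
    simp only [φ]
    linarith
  obtain rfl : α = 1 - β := by linarith
  have hz : (1 - β) * p + β * q ∈ Icc p q := by
    constructor <;> nlinarith [mul_pos hα (sub_pos.mpr hpq), mul_pos hβ (sub_pos.mpr hpq)]
  have := hφ _ hz
  simp only [φ, smul_eq_mul] at this ⊢
  nlinarith

theorem convexOn_add_half_mul_sq {a b C : ℝ} {x : ℝ → ℝ} (hx : ContinuousOn x (Icc a b))
    (hsd : ∀ t h, 0 < h → a ≤ t - h → t + h ≤ b → -(C * h ^ 2) ≤ x (t + h) - 2 * x t + x (t - h)) :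
    ConvexOn ℝ (Icc a b) (fun t => x t + C / 2 * t ^ 2) :=
  convexOn_Icc_of_symmDiff_nonneg (hx.add (by fun_prop)) fun t h hh hat htb => by
    have := hsd t h hh hat htb
    nlinarith

theorem ConvexOn.differentiableAt_of_add {S : Set ℝ} {φ ψ : ℝ → ℝ} {x : ℝ}
    (hφ : ConvexOn ℝ S φ) (hψ : ConvexOn ℝ S ψ) (hx : x ∈ interior S)
    (hd : DifferentiableAt ℝ (φ + ψ) x) : DifferentiableAt ℝ φ x := by
  have hr := hφ.hasDerivWithinAt_rightDeriv_of_mem_interior hx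
  have hl := hφ.hasDerivWithinAt_leftDeriv_of_mem_interior hx
  have hsum_r := (uniqueDiffWithinAt_Ioi x).eq_deriv _
    (hr.add (hψ.hasDerivWithinAt_rightDeriv_of_mem_interior hx)) hd.hasDerivAt.hasDerivWithinAt
  have hsum_l := (uniqueDiffWithinAt_Iio x).eq_deriv _
    (hl.add (hψ.hasDerivWithinAt_leftDeriv_of_mem_interior hx)) hd.hasDerivAt.hasDerivWithinAt
  have hφ_jump := hφ.leftDeriv_le_rightDeriv_of_mem_interior hx
  have hψ_jump := hψ.leftDeriv_le_rightDeriv_of_mem_interior hx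
  have heq : derivWithin φ (Iio x) x = derivWithin φ (Ioi x) x := by linarith
  have := (heq ▸ hl.Iic_of_Iio).union hr.Ici_of_Ioi
  rw [Iic_union_Ici, hasDerivWithinAt_univ] at this
  exact this.differentiableAt

theorem ConvexOn.monotoneOn_of_hasDerivAt {S : Set ℝ} {f f' : ℝ → ℝ} (hf : ConvexOn ℝ S f)
    (hf' : ∀ t ∈ S, HasDerivAt f (f' t) t) : MonotoneOn f' S :=
  (hf.monotoneOn_deriv fun t ht => (hf' t ht).differentiableAt).congr fun t ht => (hf' t ht).deriv

theorem abs_sub_le_of_monotoneOn_add_mul {S : Set ℝ} {f : ℝ → ℝ} {C : ℝ}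
    (h₁ : MonotoneOn (fun t => f t + C * t) S) (h₂ : MonotoneOn (fun t => -f t + C * t) S)
    {s t : ℝ} (hs : s ∈ S) (ht : t ∈ S) : |f s - f t| ≤ C * |s - t| := by
  wlog hst : s ≤ t generalizing s t
  · rw [abs_sub_comm, abs_sub_comm s]
    exact this ht hs (le_of_not_ge hst)
  have h₁ := h₁ hs ht hst
  have h₂ := h₂ hs ht hst
  simp only at h₁ h₂
  rw [abs_of_nonpos (sub_nonpos.mpr hst), abs_le]
  constructor <;> linarith

theorem second_symmetric_difference_C11_general
    (ℓ C : ℝ)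
    (x : ℝ → ℝ)
    (hcont : ContinuousOn x (Icc 0 ℓ))
    (hsd : ∀ t : ℝ, ∀ h : ℝ, 0 < h → 0 ≤ t - h → t + h ≤ ℓ →
      |x (t + h) - 2 * x t + x (t - h)| ≤ C * h ^ 2) :
    ∃ x' : ℝ → ℝ,
      (∀ t ∈ Ioo (0:ℝ) ℓ, HasDerivAt x (x' t) t) ∧
      (∀ s ∈ Ioo (0:ℝ) ℓ, ∀ t ∈ Ioo (0:ℝ) ℓ, |x' s - x' t| ≤ C * |s - t|) := by
  have hG := convexOn_add_half_mul_sq hcont fun t h hh h0 hℓ => (abs_le.mp (hsd t h hh h0 hℓ)).1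
  have hF := convexOn_add_half_mul_sq (C := C) (x := fun t => -x t) hcont.neg
    fun t h hh h0 hℓ => by linarith [(abs_le.mp (hsd t h hh h0 hℓ)).2]
  have hq : ∀ t, HasDerivAt (fun t => C / 2 * t ^ 2) (C * t) t := fun t =>
    ((hasDerivAt_pow 2 t).const_mul (C / 2)).congr_deriv (by norm_num; ring)
  have hdiff : ∀ t ∈ Ioo 0 ℓ, DifferentiableAt ℝ x t := fun t ht => by
    have hsum : DifferentiableAt ℝ
        ((fun t => x t + C / 2 * t ^ 2) + fun t => -x t + C / 2 * t ^ 2) t :=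
      ((hq t).const_mul 2).differentiableAt.congr_of_eventuallyEq (.of_forall fun s => by simp; ring)
    exact ((hG.differentiableAt_of_add hF (by rwa [interior_Icc]) hsum).sub
      (hq t).differentiableAt).congr_of_eventuallyEq (.of_forall fun s => by simp)
  have hIoo : Convex ℝ (Ioo 0 ℓ) := convex_Ioo 0 ℓ
  refine ⟨deriv x, fun t ht => (hdiff t ht).hasDerivAt, fun s hs t ht =>
    abs_sub_le_of_monotoneOn_add_mul ?_ ?_ hs ht⟩
  · exact (hG.subset Ioo_subset_Icc_self hIoo).monotoneOn_of_hasDerivAt fun t ht =>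
      (hdiff t ht).hasDerivAt.add (hq t)
  · exact (hF.subset Ioo_subset_Icc_self hIoo).monotoneOn_of_hasDerivAt fun t ht =>
      (hdiff t ht).hasDerivAt.neg.add (hq t)

/-- **Second-symmetric-difference lemma (from the proof of Lemma 4.6).**
If `x : [0, ℓ] → ℝ` is continuous and its second symmetric differences satisfy
`|x(t+h) − 2x(t) + x(t−h)| ≤ C h²`, then `x` is differentiable on `(0, ℓ)` with
`C`-Lipschitz derivative. -/
theorem second_symmetric_difference_C11
    (ℓ C : ℝ) (hC : 0 ≤ C)
    (x : ℝ → ℝ)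
    (hcont : ContinuousOn x (Icc 0 ℓ))
    (hsd : ∀ t : ℝ, ∀ h : ℝ, 0 < h → 0 ≤ t - h → t + h ≤ ℓ →
      |x (t + h) - 2 * x t + x (t - h)| ≤ C * h ^ 2) :
    ∃ x' : ℝ → ℝ,
      (∀ t ∈ Ioo (0:ℝ) ℓ, HasDerivAt x (x' t) t) ∧
      (∀ s ∈ Ioo (0:ℝ) ℓ, ∀ t ∈ Ioo (0:ℝ) ℓ, |x' s - x' t| ≤ C * |s - t|) :=
  second_symmetric_difference_C11_general ℓ C x hcont hsd
end

section
/- Let θ : [a,b] → ℝ be nondecreasing and continuous, and define c : [a,b] → ℝ² by c(t) = (cos θ(t), sin θ(t)). Then the total variation of c on [a,b] equals θ(b) − θ(a), i.e. eVariationOn c (Set.Icc a b) = θ(b) − θ(a). (The identification, used in the proof of the paper's Proposition 4.2, of the total curvature of a C¹ planar curve with the increase of its turning angle.) -/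
/-!
Since `c = cosSin ∘ θ` and the variation is invariant under the monotone reparametrization `θ`,
which maps `[a, b]` onto `[θ a, θ b]`, it is the length of the unit-speed parametrization of the
circle over `[θ a, θ b]`. Chords are shorter than arcs, so this is at most `θ b - θ a`; conversely,
`n` equal chords of an arc of angle `L` have total length `2n sin (L / 2n) = L sinc (L / 2n) → L`.
-/

open Set Filter Topology Real

theorem eVariationOn.sum_uniformPartition_le {E : Type*} [PseudoEMetricSpace E] (f : ℝ → E)
    {p q : ℝ} (hpq : p ≤ q) (n : ℕ) :
    ∑ i ∈ Finset.range n, edist (f (p + (i + 1) / n * (q - p))) (f (p + i / n * (q - p)))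
      ≤ eVariationOn f (Icc p q) := by
  set u : ℕ → ℝ := fun i => p + i / n * (q - p)
  have hu : MonotoneOn u (Icc 0 n) := fun i _ j _ hij => by
    simp only [u]; gcongr
  have hmem : ∀ i ∈ Icc 0 n, u i ∈ Icc p q := fun i hi => by
    have hfrac_le : (i : ℝ) / n ≤ 1 := div_le_one_of_le₀ (by exact_mod_cast hi.2) n.cast_nonneg
    have hfrac_nonneg : 0 ≤ (i : ℝ) / n := by positivity
    constructor <;> nlinarith
  rw [Finset.range_eq_Ico]
  simpa only [u, Nat.cast_add, Nat.cast_one] using eVariationOn.sum_le_of_monotoneOn_Icc hu hmem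

noncomputable def cosSin (x : ℝ) : EuclideanSpace ℝ (Fin 2) := !₂[cos x, sin x]

theorem dist_cosSin (x y : ℝ) : dist (cosSin x) (cosSin y) = 2 * |sin ((x - y) / 2)| := by
  rw [EuclideanSpace.dist_eq, ← sqrt_sq (by positivity : 0 ≤ 2 * |sin ((x - y) / 2)|)]
  congr 1
  have h := sin_sq_eq_half_sub ((x - y) / 2)
  rw [show 2 * ((x - y) / 2) = x - y by ring, cos_sub] at h
  simp only [cosSin, Fin.sum_univ_two, Real.dist_eq, sq_abs, mul_pow, Matrix.cons_val_zero,
    Matrix.cons_val_one, Matrix.cons_val_fin_one]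
  nlinarith [sin_sq_add_cos_sq x, sin_sq_add_cos_sq y]

theorem lipschitzWith_cosSin : LipschitzWith 1 cosSin := by
  refine LipschitzWith.of_dist_le_mul fun x y => ?_
  rw [dist_cosSin, NNReal.coe_one, one_mul, Real.dist_eq]
  have := abs_sin_le_abs (x := (x - y) / 2)
  rw [abs_div, abs_two] at this
  linarith

theorem ofReal_mul_sinc_le_eVariationOn_cosSin {p q : ℝ} (hpq : p ≤ q) {n : ℕ} (hn : n ≠ 0) :
    ENNReal.ofReal ((q - p) * sinc ((q - p) / 2 / n)) ≤ eVariationOn cosSin (Icc p q) := by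
  refine le_trans ?_ (eVariationOn.sum_uniformPartition_le cosSin hpq n)
  have hchord (i : ℕ) : edist (cosSin (p + (i + 1) / n * (q - p))) (cosSin (p + i / n * (q - p)))
      = ENNReal.ofReal (2 * |sin ((q - p) / 2 / n)|) := by
    rw [edist_dist, dist_cosSin]
    congr 4
    ring
  have hsinc : (q - p) * sinc ((q - p) / 2 / n) = n * (2 * sin ((q - p) / 2 / n)) := by
    rcases eq_or_ne (q - p) 0 with h | h
    · simp [h]
    · rw [sinc_of_ne_zero (by positivity)]
      field_simp
  rw [Finset.sum_congr rfl fun i _ => hchord i, Finset.sum_const, Finset.card_range, nsmul_eq_mul,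
    ← ENNReal.ofReal_natCast, ← ENNReal.ofReal_mul n.cast_nonneg, hsinc]
  gcongr
  exact le_abs_self _

theorem eVariationOn_cosSin_Icc (p q : ℝ) :
    eVariationOn cosSin (Icc p q) = ENNReal.ofReal (q - p) := by
  rcases lt_or_ge q p with hqp | hpq
  · simp [Icc_eq_empty_of_lt hqp, ENNReal.ofReal_of_nonpos (sub_nonpos.2 hqp.le)]
  refine le_antisymm ?_ ?_
  · simpa using lipschitzWith_cosSin.lipschitzOnWith.comp_eVariationOn_le (mapsTo_univ id (Icc p q))
  · have hlim : Tendsto (fun n : ℕ => (q - p) * sinc ((q - p) / 2 / n)) atTop (𝓝 (q - p)) := by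
      simpa using ((continuous_sinc.tendsto 0).comp
        (tendsto_const_div_atTop_nhds_zero_nat ((q - p) / 2))).const_mul (q - p)
    exact le_of_tendsto (ENNReal.tendsto_ofReal hlim) <| eventually_atTop.2
      ⟨1, fun n hn => ofReal_mul_sinc_le_eVariationOn_cosSin hpq (Nat.one_le_iff_ne_zero.1 hn)⟩

/-- **Total variation of the unit tangent equals the increase of the turning angle.**
If `θ : [a, b] → ℝ` is nondecreasing and continuous and `c(t) = (cos θ(t), sin θ(t))`,
then the total variation of `c` on `[a, b]` is `θ(b) − θ(a)`. -/
theorem eVariationOn_circle_of_monotone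
    (a b : ℝ) (hab : a ≤ b)
    (θ : ℝ → ℝ)
    (hmono : MonotoneOn θ (Icc a b))
    (hcont : ContinuousOn θ (Icc a b))
    (c : ℝ → EuclideanSpace ℝ (Fin 2))
    (hc : ∀ t, c t = ![Real.cos (θ t), Real.sin (θ t)]) :
    eVariationOn c (Icc a b) = ENNReal.ofReal (θ b - θ a) := by
  have hc' : c = cosSin ∘ θ := funext fun t => WithLp.ofLp_injective 2 (hc t)
  rw [hc', eVariationOn.comp_eq_of_monotoneOn _ _ hmono, hcont.image_Icc_of_monotoneOn hab hmono,
    eVariationOn_cosSin_Icc]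
end

section
/- Let Ω ⊆ ℝᵐ be open, let f : Ω → ℝ be Lipschitz on Ω, let x₀ ∈ Ω, and let L : ℝᵐ → ℝ be a continuous linear map. Suppose that the tangent cone of the graph of f (over Ω) at (x₀, f(x₀)) is contained in the graph of L, i.e. tangentConeAt ℝ {p : ℝᵐ × ℝ | p.1 ∈ Ω ∧ p.2 = f(p.1)} (x₀, f(x₀)) ⊆ {(v, L v) | v ∈ ℝᵐ}. Then f is differentiable at x₀ with derivative L (HasFDerivAt f L x₀). (The claim, used in the proof of the paper's Lemma 2.3, that a locally Lipschitz function whose graph has a non-vertical flat tangent cone is differentiable there.) -/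
open Set Filter Topology Asymptotics

/-! If `f` were not differentiable at `x₀` with derivative `L`, there would be `ε > 0` and points
`x → x₀` with `‖f x - f x₀ - L (x - x₀)‖ > ε ‖x - x₀‖`. Since `f` is Lipschitz, the rescaled
secants `‖x - x₀‖⁻¹ • (x - x₀, f x - f x₀)` of the graph stay bounded, so by compactness they
cluster at some `q`. This `q` lies in the tangent cone of the graph, hence in the graph of `L`,
yet it inherits the vertical gap `‖q.2 - L q.1‖ ≥ ε` from the secants. -/

theorem mem_tangentConeAt_of_mapClusterPt {R E α : Type*} [AddCommGroup E] [SMul R E]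
    [TopologicalSpace E] {s : Set E} {x y : E} {l : Filter α} {c : α → R} {d : α → E}
    (hd : Tendsto d l (𝓝 0)) (hs : ∀ᶠ n in l, x + d n ∈ s)
    (hy : MapClusterPt y l fun n ↦ c n • d n) :
    y ∈ tangentConeAt R s x := by
  have : (l ⊓ comap (fun n ↦ c n • d n) (𝓝 y)).NeBot := by
    rwa [neBot_inf_comap_iff_map, inf_comm]
  exact mem_tangentConeAt_of_seq _ c d (hd.mono_left inf_le_left) (hs.filter_mono inf_le_left)
    (tendsto_comap.mono_left inf_le_right)

theorem LipschitzOnWith.isBigO_sub {E F : Type*} [SeminormedAddCommGroup E]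
    [SeminormedAddCommGroup F] {K : NNReal} {f : E → F} {s : Set E} {x₀ : E}
    (hf : LipschitzOnWith K f s) (hs : s ∈ 𝓝 x₀) :
    (fun x ↦ f x - f x₀) =O[𝓝 x₀] fun x ↦ x - x₀ :=
  .of_bound K <| by
    filter_upwards [hs] with x hx using hf.norm_sub_le hx (mem_of_mem_nhds hs)

section GraphSecant

variable {E F : Type*} [NormedAddCommGroup E] [NormedSpace ℝ E] [NormedAddCommGroup F]
  [NormedSpace ℝ F] {f : E → F} {s : Set E} {x₀ : E}

noncomputable def graphSecant (f : E → F) (x₀ x : E) : E × F :=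
  ‖x - x₀‖⁻¹ • (x - x₀, f x - f x₀)

theorem norm_graphSecant_le {C : ℝ} {x : E} (hx : ‖f x - f x₀‖ ≤ C * ‖x - x₀‖) :
    ‖graphSecant f x₀ x‖ ≤ max 1 C := by
  rcases eq_or_ne x x₀ with rfl | hne
  · simp [graphSecant]
  have hpos : 0 < ‖x - x₀‖ := norm_pos_iff.mpr (sub_ne_zero.mpr hne)
  rw [graphSecant, norm_smul, Prod.norm_mk, norm_inv, norm_norm,
    mul_max_of_nonneg _ _ (inv_nonneg.mpr hpos.le), inv_mul_cancel₀ hpos.ne']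
  exact max_le_max le_rfl ((inv_mul_le_iff₀ hpos).mpr (by rwa [mul_comm]))

theorem le_norm_graphSecant_snd_sub {L : E →L[ℝ] F} {ε : ℝ} {x : E}
    (hx : ε * ‖x - x₀‖ < ‖f x - f x₀ - L (x - x₀)‖) :
    ε ≤ ‖(graphSecant f x₀ x).2 - L (graphSecant f x₀ x).1‖ := by
  have hpos : 0 < ‖x - x₀‖ := by
    refine norm_pos_iff.mpr (sub_ne_zero.mpr fun h ↦ ?_)
    simp [h] at hx
  have hsecant : (graphSecant f x₀ x).2 - L (graphSecant f x₀ x).1 =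
      ‖x - x₀‖⁻¹ • (f x - f x₀ - L (x - x₀)) := by
    simp [graphSecant, smul_sub]
  rw [hsecant, norm_smul, norm_inv, norm_norm, le_inv_mul_iff₀ hpos, mul_comm]
  exact hx.le

theorem exists_mem_tangentConeAt_mapClusterPt_graphSecant [ProperSpace E] [ProperSpace F]
    {l : Filter E} [l.NeBot] (hl : l ≤ 𝓝 x₀) (hs : s ∈ 𝓝 x₀)
    (hf : (fun x ↦ f x - f x₀) =O[𝓝 x₀] fun x ↦ x - x₀) :
    ∃ q ∈ tangentConeAt ℝ {p : E × F | p.1 ∈ s ∧ p.2 = f p.1} (x₀, f x₀),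
      MapClusterPt q l (graphSecant f x₀) := by
  obtain ⟨C, hC⟩ := hf.bound
  obtain ⟨q, -, hq⟩ := (isCompact_closedBall (0 : E × F) (max 1 C)).exists_mapClusterPt
    (u := graphSecant f x₀) (tendsto_principal.mpr <| Eventually.mono (hl hC) fun x hx ↦
      mem_closedBall_zero_iff.mpr (norm_graphSecant_le hx))
  have hd : Tendsto (fun x ↦ (x - x₀, f x - f x₀)) (𝓝 x₀) (𝓝 0) := by
    have hsub : Tendsto (fun x ↦ x - x₀) (𝓝 x₀) (𝓝 0) := by
      simpa using (tendsto_id (x := 𝓝 x₀)).sub_const x₀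
    simpa only [Prod.mk_zero_zero] using hsub.prodMk_nhds (hf.trans_tendsto hsub)
  refine ⟨q, mem_tangentConeAt_of_mapClusterPt (hd.mono_left hl) ?_ hq, hq⟩
  filter_upwards [hl hs] with x hx
  simp [hx]

theorem hasFDerivAt_of_isBigO_of_tangentConeAt_subset_graph [ProperSpace E] [ProperSpace F]
    {L : E →L[ℝ] F} (hs : s ∈ 𝓝 x₀) (hf : (fun x ↦ f x - f x₀) =O[𝓝 x₀] fun x ↦ x - x₀)
    (hcone : tangentConeAt ℝ {p : E × F | p.1 ∈ s ∧ p.2 = f p.1} (x₀, f x₀) ⊆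
      {q : E × F | q.2 = L q.1}) :
    HasFDerivAt f L x₀ := by
  rw [hasFDerivAt_iff_isLittleO]
  by_contra hnot
  obtain ⟨ε, hε, hfreq⟩ : ∃ ε > 0, ∃ᶠ x in 𝓝 x₀, ε * ‖x - x₀‖ < ‖f x - f x₀ - L (x - x₀)‖ := by
    simpa [IsLittleO_def, isBigOWith_iff] using hnot
  set l := 𝓝 x₀ ⊓ 𝓟 {x | ε * ‖x - x₀‖ < ‖f x - f x₀ - L (x - x₀)‖}
  have : l.NeBot := frequently_iff_neBot.mp hfreq
  obtain ⟨q, hq_cone, hq⟩ :=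
    exists_mem_tangentConeAt_mapClusterPt_graphSecant (l := l) inf_le_left hs hf
  have hq_far : ε ≤ ‖q.2 - L q.1‖ := by
    refine (isClosed_le continuous_const
      (continuous_snd.sub (L.continuous.comp continuous_fst)).norm).mem_of_mapClusterPt hq ?_
    filter_upwards [mem_inf_of_right (mem_principal_self _)] with x hx
    exact le_norm_graphSecant_snd_sub hx
  rw [hcone hq_cone, sub_self, norm_zero] at hq_far
  exact hε.not_ge hq_far

end GraphSecant

/-- **Differentiability from a flat non-vertical tangent cone (from the proof of
Lemma 2.3).** If `f` is Lipschitz on an open set `Ω`, `x₀ ∈ Ω`, and the tangent cone of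
the graph of `f` over `Ω` at `(x₀, f x₀)` is contained in the graph of a continuous
linear map `L`, then `f` is differentiable at `x₀` with derivative `L`. -/
theorem hasFDerivAt_of_tangentCone_subset_graph
    (m : ℕ)
    (Ω : Set (EuclideanSpace ℝ (Fin m))) (hΩ : IsOpen Ω)
    (f : EuclideanSpace ℝ (Fin m) → ℝ)
    (K : NNReal) (hf : LipschitzOnWith K f Ω)
    (x₀ : EuclideanSpace ℝ (Fin m)) (hx₀ : x₀ ∈ Ω)
    (L : EuclideanSpace ℝ (Fin m) →L[ℝ] ℝ)
    (hcone : tangentConeAt ℝ {p : EuclideanSpace ℝ (Fin m) × ℝ | p.1 ∈ Ω ∧ p.2 = f p.1}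
        (x₀, f x₀)
      ⊆ {q : EuclideanSpace ℝ (Fin m) × ℝ | q.2 = L q.1}) :
    HasFDerivAt f L x₀ :=
  hasFDerivAt_of_isBigO_of_tangentConeAt_subset_graph (hΩ.mem_nhds hx₀)
    (hf.isBigO_sub (hΩ.mem_nhds hx₀)) hcone
end
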